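/- arXiv:math/0407218 — 3 statements merged into one kernel-verified Lean document; each statement's English description precedes it below -/
import Mathlib

section
/- The 0-Ariki-Koike-Shoji algebra H_{n,r}(0) has exactly r(r+1)^{n−1} isomorphism classes of simple modules, all of dimension one over ℂ. -/
noncomputable section

open Polynomial

namespace AKS0

/-- Generators: `Sum.inl i` is `T_{i+1}` (0-indexed `T_i`, acting on positions `i, i+1`),
`Sum.inr j` is `ξ_{j+1}` (0-indexed `ξ_j`). -/
abbrev Gen (n : ℕ) : Type := Fin (n - 1) ⊕ Fin n

abbrev FreeAKS (n : ℕ) : Type := FreeAlgebra ℂ (Gen n)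

def tGen (n : ℕ) (i : Fin (n - 1)) : FreeAKS n := FreeAlgebra.ι ℂ (Sum.inl i)

def xGen (n : ℕ) (j : Fin n) : FreeAKS n := FreeAlgebra.ι ℂ (Sum.inr j)

/-- The position `i` of `Fin (n-1)`, viewed in `Fin n`. -/
def idx0 (n : ℕ) (i : Fin (n - 1)) : Fin n := ⟨i.1, by have := i.2; omega⟩

/-- The position `i+1` of `Fin n`, for `i : Fin (n-1)`. -/
def idx1 (n : ℕ) (i : Fin (n - 1)) : Fin n := ⟨i.1 + 1, by have := i.2; omega⟩

/-- The Lagrange polynomial `P_k(X) = ∏_{l ≠ k} (X - u_l)/(u_k - u_l)`. -/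
def lagPoly (r : ℕ) (u : Fin r → ℂ) (k : Fin r) : ℂ[X] :=
  ∏ l ∈ Finset.univ.erase k, (C ((u k - u l)⁻¹) * (X - C (u l)))

/-- The defining relations of the Ariki-Koike-Shoji algebra `H_{n,r}(q)`. -/
inductive Rel (n r : ℕ) (u : Fin r → ℂ) (q : ℂ) : FreeAKS n → FreeAKS n → Prop
  | quad (i : Fin (n - 1)) :
      Rel n r u q ((tGen n i - algebraMap ℂ (FreeAKS n) q) * (tGen n i + 1)) 0
  | braid (i j : Fin (n - 1)) (h : (j : ℕ) = (i : ℕ) + 1) :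
      Rel n r u q (tGen n i * tGen n j * tGen n i) (tGen n j * tGen n i * tGen n j)
  | commTT (i j : Fin (n - 1)) (h : (i : ℕ) + 2 ≤ (j : ℕ) ∨ (j : ℕ) + 2 ≤ (i : ℕ)) :
      Rel n r u q (tGen n i * tGen n j) (tGen n j * tGen n i)
  | xPoly (j : Fin n) :
      Rel n r u q (Polynomial.aeval (xGen n j) (∏ l : Fin r, (X - C (u l)))) 0
  | commXX (i j : Fin n) :
      Rel n r u q (xGen n i * xGen n j) (xGen n j * xGen n i)
  | cross (i : Fin (n - 1)) :
      Rel n r u q (tGen n i * xGen n (idx0 n i))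
        (xGen n (idx1 n i) * tGen n i -
          (q - 1) • ∑ p ∈ Finset.univ.filter (fun p : Fin r × Fin r => p.1 < p.2),
            (u p.2 - u p.1) •
              (Polynomial.aeval (xGen n (idx0 n i)) (lagPoly r u p.1) *
                Polynomial.aeval (xGen n (idx1 n i)) (lagPoly r u p.2)))
  | sumComm (i : Fin (n - 1)) :
      Rel n r u q (tGen n i * (xGen n (idx1 n i) + xGen n (idx0 n i)))
        ((xGen n (idx1 n i) + xGen n (idx0 n i)) * tGen n i)
  | commTX (i : Fin (n - 1)) (j : Fin n) (h : j ≠ idx0 n i) (h' : j ≠ idx1 n i) :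
      Rel n r u q (tGen n i * xGen n j) (xGen n j * tGen n i)

/-- The Ariki-Koike-Shoji algebra `H_{n,r}(q)` (Shoji's presentation, normalized). -/
abbrev AKSAlg (n r : ℕ) (u : Fin r → ℂ) (q : ℂ) : Type := RingQuot (Rel n r u q)

/-- The generator `T_i` in `H_{n,r}(q)`. -/
def Ti (n r : ℕ) (u : Fin r → ℂ) (q : ℂ) (i : Fin (n - 1)) : AKSAlg n r u q :=
  RingQuot.mkAlgHom ℂ (Rel n r u q) (tGen n i)

/-- The generator `ξ_j` in `H_{n,r}(q)`. -/
def Xi (n r : ℕ) (u : Fin r → ℂ) (q : ℂ) (j : Fin n) : AKSAlg n r u q :=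
  RingQuot.mkAlgHom ℂ (Rel n r u q) (xGen n j)

/-- `L_c = P_{c_1}(ξ_1) ⋯ P_{c_n}(ξ_n)`. -/
def Lc (n r : ℕ) (u : Fin r → ℂ) (q : ℂ) (c : Fin n → Fin r) : AKSAlg n r u q :=
  (List.ofFn fun j : Fin n => Polynomial.aeval (Xi n r u q j) (lagPoly r u (c j))).prod


/-! ### Polynomial lemmas -/

section Poly

variable {r : ℕ} {u : Fin r → ℂ}

/-- the full product polynomial -/
def pAll (r : ℕ) (u : Fin r → ℂ) : ℂ[X] := ∏ l : Fin r, (X - C (u l))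

lemma lagPoly_eq_basis (k : Fin r) : lagPoly r u k = Lagrange.basis Finset.univ u k := by
  rfl

lemma lagPoly_sum (hu : Function.Injective u) (hr : 1 ≤ r) :
    ∑ k : Fin r, lagPoly r u k = 1 := by
  simp only [lagPoly_eq_basis]
  exact Lagrange.sum_basis hu.injOn ⟨⟨0, hr⟩, Finset.mem_univ _⟩

lemma lagPoly_eval_self (hu : Function.Injective u) (k : Fin r) : (lagPoly r u k).eval (u k) = 1 := by
  rw [lagPoly_eq_basis]
  exact Lagrange.eval_basis_self hu.injOn (Finset.mem_univ _)

lemma lagPoly_eval_ne {k m : Fin r} (h : k ≠ m) : (lagPoly r u k).eval (u m) = 0 := by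
  rw [lagPoly_eq_basis]
  exact Lagrange.eval_basis_of_ne h (Finset.mem_univ _)

lemma lagPoly_eval (hu : Function.Injective u) (k m : Fin r) :
    (lagPoly r u m).eval (u k) = if m = k then 1 else 0 := by
  split_ifs with h
  · subst h; exact lagPoly_eval_self hu m
  · exact lagPoly_eval_ne h

/-- `(X - u k) * lagPoly k` is a scalar multiple of `pAll`. -/
lemma lagPoly_mul_root (k : Fin r) :
    ∃ K : ℂ, (X - C (u k)) * lagPoly r u k = C K * pAll r u := by
  refine ⟨∏ l ∈ Finset.univ.erase k, (u k - u l)⁻¹, ?_⟩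
  unfold lagPoly pAll
  rw [Finset.prod_mul_distrib, ← map_prod]
  rw [← mul_assoc, mul_comm (X - C (u k)), mul_assoc]
  congr 1
  rw [← Finset.mul_prod_erase _ _ (Finset.mem_univ k)]

lemma pAll_dvd_lagPoly_mul {a b : Fin r} (h : a ≠ b) :
    pAll r u ∣ lagPoly r u a * lagPoly r u b := by
  unfold lagPoly pAll
  rw [Finset.prod_mul_distrib, Finset.prod_mul_distrib]
  have h1 : (X - C (u a)) ∣ ∏ l ∈ Finset.univ.erase b, (X - C (u l)) :=
    Finset.dvd_prod_of_mem _ (Finset.mem_erase.2 ⟨h, Finset.mem_univ _⟩)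
  obtain ⟨w, hw⟩ := h1
  calc ∏ l : Fin r, (X - C (u l))
      = (X - C (u a)) * ∏ l ∈ Finset.univ.erase a, (X - C (u l)) :=
        (Finset.mul_prod_erase _ _ (Finset.mem_univ a)).symm
    _ ∣ _ := by
        rw [hw]
        refine Dvd.intro ((∏ l ∈ Finset.univ.erase a, C ((u a - u l)⁻¹)) *
          (∏ l ∈ Finset.univ.erase b, C ((u b - u l)⁻¹)) * w) ?_
        ring

lemma pAll_dvd_lagPoly_sq (hu : Function.Injective u) (a : Fin r) :
    pAll r u ∣ lagPoly r u a * lagPoly r u a - lagPoly r u a := by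
  have h1 : lagPoly r u a * lagPoly r u a - lagPoly r u a
      = lagPoly r u a * (lagPoly r u a - 1) := by ring
  rw [h1]
  have h2 : ∏ l ∈ Finset.univ.erase a, (X - C (u l)) ∣ lagPoly r u a := by
    refine ⟨∏ l ∈ Finset.univ.erase a, C ((u a - u l)⁻¹), ?_⟩
    unfold lagPoly
    rw [Finset.prod_mul_distrib]
    ring
  have h3 : (X - C (u a)) ∣ (lagPoly r u a - 1) := by
    rw [dvd_iff_isRoot]
    simp only [IsRoot, eval_sub, eval_one]
    rw [lagPoly_eval_self hu a, sub_self]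
  have : pAll r u = (X - C (u a)) * ∏ l ∈ Finset.univ.erase a, (X - C (u l)) :=
    (Finset.mul_prod_erase _ _ (Finset.mem_univ a)).symm
  rw [this, mul_comm (lagPoly r u a)]
  exact mul_dvd_mul h3 h2

lemma lagPoly_mul_lagPoly (hu : Function.Injective u) (a b : Fin r) :
    ∃ qq : ℂ[X], lagPoly r u a * lagPoly r u b
      = (if a = b then lagPoly r u a else 0) + pAll r u * qq := by
  by_cases h : a = b
  · subst h
    obtain ⟨w, hw⟩ := pAll_dvd_lagPoly_sq (u := u) hu a
    refine ⟨w, ?_⟩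
    rw [if_pos rfl]
    linear_combination hw
  · obtain ⟨w, hw⟩ := pAll_dvd_lagPoly_mul (u := u) h
    exact ⟨w, by rw [if_neg h]; linear_combination hw⟩

end Poly

/-! ### Relations in the quotient algebra -/

section Rels

variable (n r : ℕ) (u : Fin r → ℂ)

local notation "A" => AKSAlg n r u 0
local notation "mk" => RingQuot.mkAlgHom ℂ (Rel n r u 0)

lemma mk_tGen (i : Fin (n-1)) : mk (tGen n i) = Ti n r u 0 i := rfl
lemma mk_xGen (j : Fin n) : mk (xGen n j) = Xi n r u 0 j := rfl

lemma mk_aeval (j : Fin n) (P : ℂ[X]) :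
    mk (Polynomial.aeval (xGen n j) P) = Polynomial.aeval (Xi n r u 0 j) P :=
  (Polynomial.aeval_algHom_apply _ _ _).symm

/-- T_i^2 = -T_i -/
lemma Ti_sq (i : Fin (n-1)) : Ti n r u 0 i * Ti n r u 0 i = - Ti n r u 0 i := by
  have h := RingQuot.mkAlgHom_rel ℂ (Rel.quad (n := n) (r := r) (u := u) (q := 0) i)
  simp only [map_mul, map_sub, map_add, map_zero, map_one] at h
  rw [mk_tGen] at h
  simp only [map_zero, sub_zero] at h
  have : Ti n r u 0 i * Ti n r u 0 i + Ti n r u 0 i = 0 := by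
    rw [← h]; noncomm_ring
  exact eq_neg_of_add_eq_zero_left this


lemma Ti_braid {i j : Fin (n-1)} (h : (j : ℕ) = (i : ℕ) + 1) :
    Ti n r u 0 i * Ti n r u 0 j * Ti n r u 0 i
      = Ti n r u 0 j * Ti n r u 0 i * Ti n r u 0 j := by
  have h := RingQuot.mkAlgHom_rel ℂ (Rel.braid (n := n) (r := r) (u := u) (q := 0) i j h)
  simpa only [map_mul, mk_tGen] using h

lemma Ti_commTT {i j : Fin (n-1)} (h : (i : ℕ) + 2 ≤ (j : ℕ) ∨ (j : ℕ) + 2 ≤ (i : ℕ)) :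
    Ti n r u 0 i * Ti n r u 0 j = Ti n r u 0 j * Ti n r u 0 i := by
  have h := RingQuot.mkAlgHom_rel ℂ (Rel.commTT (n := n) (r := r) (u := u) (q := 0) i j h)
  simpa only [map_mul, mk_tGen] using h

lemma pAll_Xi (j : Fin n) : Polynomial.aeval (Xi n r u 0 j) (pAll r u) = 0 := by
  have h := RingQuot.mkAlgHom_rel ℂ (Rel.xPoly (n := n) (r := r) (u := u) (q := 0) j)
  rw [map_zero] at h
  rw [← mk_aeval]
  exact h

lemma Xi_commXX (i j : Fin n) :
    Xi n r u 0 i * Xi n r u 0 j = Xi n r u 0 j * Xi n r u 0 i := by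
  have h := RingQuot.mkAlgHom_rel ℂ (Rel.commXX (n := n) (r := r) (u := u) (q := 0) i j)
  simpa only [map_mul, mk_xGen] using h

/-- The correction term in the cross relation, at `q = 0`. -/
def Sa (i : Fin (n-1)) : AKSAlg n r u 0 :=
  ∑ p ∈ Finset.univ.filter (fun p : Fin r × Fin r => p.1 < p.2),
    (u p.2 - u p.1) •
      (Polynomial.aeval (Xi n r u 0 (idx0 n i)) (lagPoly r u p.1) *
        Polynomial.aeval (Xi n r u 0 (idx1 n i)) (lagPoly r u p.2))

lemma cross_eq (i : Fin (n-1)) :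
    Ti n r u 0 i * Xi n r u 0 (idx0 n i)
      = Xi n r u 0 (idx1 n i) * Ti n r u 0 i + Sa n r u i := by
  have h := RingQuot.mkAlgHom_rel ℂ (Rel.cross (n := n) (r := r) (u := u) (q := 0) i)
  simp only [map_mul, map_sub, map_smul, map_sum, mk_tGen, mk_xGen, mk_aeval] at h
  rw [h, Sa]
  module

lemma sumComm_eq (i : Fin (n-1)) :
    Ti n r u 0 i * (Xi n r u 0 (idx1 n i) + Xi n r u 0 (idx0 n i))
      = (Xi n r u 0 (idx1 n i) + Xi n r u 0 (idx0 n i)) * Ti n r u 0 i := by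
  have h := RingQuot.mkAlgHom_rel ℂ (Rel.sumComm (n := n) (r := r) (u := u) (q := 0) i)
  simpa only [map_mul, map_add, mk_tGen, mk_xGen] using h

lemma Ti_commTX (i : Fin (n-1)) (j : Fin n) (h : j ≠ idx0 n i) (h' : j ≠ idx1 n i) :
    Ti n r u 0 i * Xi n r u 0 j = Xi n r u 0 j * Ti n r u 0 i := by
  have h := RingQuot.mkAlgHom_rel ℂ (Rel.commTX (n := n) (r := r) (u := u) (q := 0) i j h h')
  simpa only [map_mul, mk_tGen, mk_xGen] using h

end Rels

/-! ### The commutative subalgebra generated by the `Xi` -/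

section XiSub

variable (n r : ℕ) (u : Fin r → ℂ)

def xiAdj : Subalgebra ℂ (AKSAlg n r u 0) := Algebra.adjoin ℂ (Set.range (Xi n r u 0))

noncomputable instance xiAdjCommRing : CommRing (xiAdj n r u) :=
  { (inferInstance : Ring (xiAdj n r u)) with
    mul_comm := (Algebra.isMulCommutative_adjoin ℂ (by
      rintro a ⟨i, rfl⟩ b ⟨j, rfl⟩
      exact Xi_commXX n r u i j)).is_comm.comm }

def xiR (j : Fin n) : xiAdj n r u :=
  ⟨Xi n r u 0 j, Algebra.subset_adjoin ⟨j, rfl⟩⟩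

def eR (j : Fin n) (k : Fin r) : xiAdj n r u :=
  Polynomial.aeval (xiR n r u j) (lagPoly r u k)

lemma eR_val (j : Fin n) (k : Fin r) :
    (eR n r u j k : AKSAlg n r u 0) = Polynomial.aeval (Xi n r u 0 j) (lagPoly r u k) :=
  (Polynomial.aeval_algHom_apply (xiAdj n r u).val (xiR n r u j) _).symm

lemma pAll_xiR (j : Fin n) : Polynomial.aeval (xiR n r u j) (pAll r u) = 0 := by
  apply Subtype.ext
  have : ((Polynomial.aeval (xiR n r u j) (pAll r u) : xiAdj n r u) : AKSAlg n r u 0)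
      = Polynomial.aeval (Xi n r u 0 j) (pAll r u) :=
    (Polynomial.aeval_algHom_apply (xiAdj n r u).val (xiR n r u j) _).symm
  rw [this, pAll_Xi]
  rfl

lemma eR_mul_eR (hu : Function.Injective u) (j : Fin n) (a b : Fin r) :
    eR n r u j a * eR n r u j b = if a = b then eR n r u j a else 0 := by
  obtain ⟨qq, hqq⟩ := lagPoly_mul_lagPoly hu a b
  have h1 : eR n r u j a * eR n r u j b
      = Polynomial.aeval (xiR n r u j) (lagPoly r u a * lagPoly r u b) :=
    (map_mul _ _ _).symm
  rw [h1, hqq, map_add, map_mul, pAll_xiR, zero_mul, add_zero]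
  split_ifs with h
  · rfl
  · exact map_zero _

lemma xiR_mul_eR (j : Fin n) (k : Fin r) :
    xiR n r u j * eR n r u j k
      = algebraMap ℂ (xiAdj n r u) (u k) * eR n r u j k := by
  obtain ⟨K, hK⟩ := lagPoly_mul_root (u := u) k
  have h1 : Polynomial.aeval (xiR n r u j) ((X - C (u k)) * lagPoly r u k)
      = Polynomial.aeval (xiR n r u j) (C K * pAll r u) := by rw [hK]
  simp only [map_mul, map_sub, Polynomial.aeval_X, Polynomial.aeval_C, pAll_xiR,
    mul_zero] at h1
  have h2 : (xiR n r u j - algebraMap ℂ _ (u k)) * eR n r u j k = 0 := h1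
  rw [sub_mul] at h2
  exact sub_eq_zero.mp h2

lemma eR_sum (hu : Function.Injective u) (hr : 1 ≤ r) (j : Fin n) :
    ∑ k : Fin r, eR n r u j k = 1 := by
  unfold eR
  rw [← map_sum (Polynomial.aeval (xiR n r u j)) (fun k => lagPoly r u k) Finset.univ]
  rw [lagPoly_sum hu hr, map_one]

def LcR (d : Fin n → Fin r) : xiAdj n r u := ∏ j, eR n r u j (d j)

lemma Lc_eq_val (d : Fin n → Fin r) :
    Lc n r u 0 d = ((LcR n r u d : xiAdj n r u) : AKSAlg n r u 0) := by
  have h1 : LcR n r u d = (List.ofFn fun j => eR n r u j (d j)).prod := by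
    rw [List.prod_ofFn]; rfl
  rw [h1]
  have h2 := map_list_prod ((xiAdj n r u).val) (List.ofFn fun j => eR n r u j (d j))
  rw [List.map_ofFn] at h2
  rw [Lc]
  have h3 : ((xiAdj n r u).val ∘ fun j => eR n r u j (d j))
      = fun j : Fin n => Polynomial.aeval (Xi n r u 0 j) (lagPoly r u (d j)) := by
    funext j
    exact eR_val n r u j (d j)
  rw [h3] at h2
  exact h2.symm

lemma LcR_sum (hu : Function.Injective u) (hr : 1 ≤ r) :
    ∑ d : Fin n → Fin r, LcR n r u d = 1 := by
  have h := Finset.prod_univ_sum (fun _ : Fin n => (Finset.univ : Finset (Fin r)))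
    (fun j k => eR n r u j k)
  rw [Fintype.piFinset_univ] at h
  have h2 : ∏ j : Fin n, ∑ k : Fin r, eR n r u j k = 1 := by
    rw [Finset.prod_eq_one]
    intro j _
    exact eR_sum n r u hu hr j
  rw [← h2, h]
  rfl

lemma Lc_sum (hu : Function.Injective u) (hr : 1 ≤ r) :
    ∑ d : Fin n → Fin r, Lc n r u 0 d = 1 := by
  have : ∑ d : Fin n → Fin r, Lc n r u 0 d
      = (((∑ d : Fin n → Fin r, LcR n r u d) : xiAdj n r u) : AKSAlg n r u 0) := by
    rw [AddSubmonoidClass.coe_finset_sum]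
    exact Finset.sum_congr rfl fun d _ => Lc_eq_val n r u d
  rw [this, LcR_sum n r u hu hr]
  rfl

lemma xiR_mul_LcR (j : Fin n) (d : Fin n → Fin r) :
    xiR n r u j * LcR n r u d
      = algebraMap ℂ (xiAdj n r u) (u (d j)) * LcR n r u d := by
  unfold LcR
  rw [← Finset.mul_prod_erase Finset.univ _ (Finset.mem_univ j), ← mul_assoc,
    xiR_mul_eR, mul_assoc]

lemma Xi_mul_Lc (j : Fin n) (d : Fin n → Fin r) :
    Xi n r u 0 j * Lc n r u 0 d
      = algebraMap ℂ (AKSAlg n r u 0) (u (d j)) * Lc n r u 0 d := by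
  have h := congrArg ((xiAdj n r u).val) (xiR_mul_LcR n r u j d)
  simp only [map_mul, AlgHom.commutes] at h
  rw [Lc_eq_val]
  exact h

end XiSub

/-! ### Module-level machinery -/

section Mod

variable {n r : ℕ} (u : Fin r → ℂ)
variable {M : Type} [AddCommGroup M] [Module (AKSAlg n r u 0) M]

local notation "am" => algebraMap ℂ (AKSAlg n r u 0)

lemma am_smul_comm (c : ℂ) (a : AKSAlg n r u 0) (x : M) :
    a • ((am c) • x) = (am c) • (a • x) := by
  rw [← mul_smul, ← mul_smul, Algebra.commutes]

lemma am_smul_cancel {c : ℂ} {x : M} (h : (am c) • x = 0) (hx : x ≠ 0) : c = 0 := by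
  by_contra hc
  apply hx
  have : ((am (c⁻¹)) * (am c)) • x = 0 := by rw [mul_smul, h, smul_zero]
  rwa [← map_mul, inv_mul_cancel₀ hc, map_one, one_smul] at this

/-- `x` is a weight vector of weight `d`. -/
def IsWt (d : Fin n → Fin r) (x : M) : Prop :=
  ∀ j : Fin n, Xi n r u 0 j • x = (am (u (d j))) • x

lemma IsWt.add {d : Fin n → Fin r} {x y : M} (hx : IsWt u d x) (hy : IsWt u d y) :
    IsWt u d (x + y) := fun j => by rw [smul_add, hx j, hy j, smul_add]

lemma IsWt.zero (d : Fin n → Fin r) : IsWt u d (0 : M) := fun j => by simp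

lemma aeval_smul_eig {j : Fin n} {μ : ℂ} {x : M}
    (h : Xi n r u 0 j • x = (am μ) • x) (Q : ℂ[X]) :
    (Polynomial.aeval (Xi n r u 0 j) Q) • x = (am (Q.eval μ)) • x := by
  have hpow : ∀ m : ℕ, (Xi n r u 0 j ^ m) • x = (am (μ ^ m)) • x := by
    intro m
    induction m with
    | zero => simp
    | succ m ih =>
      rw [pow_succ, mul_smul, h, am_smul_comm, ih, ← mul_smul, ← map_mul,
        show μ * μ ^ m = μ ^ (m + 1) by ring]
  rw [Polynomial.aeval_eq_sum_range, Polynomial.eval_eq_sum_range, map_sum,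
    Finset.sum_smul, Finset.sum_smul]
  refine Finset.sum_congr rfl fun m _ => ?_
  rw [Algebra.smul_def, map_mul, mul_smul, mul_smul, hpow m]


lemma isWt_Lc_smul (d : Fin n → Fin r) (x : M) :
    IsWt u d ((Lc n r u 0 d) • x) := by
  intro j
  rw [← mul_smul, Xi_mul_Lc, mul_smul]

lemma sum_Lc_smul (hu : Function.Injective u) (hr : 1 ≤ r) (x : M) :
    ∑ d : Fin n → Fin r, (Lc n r u 0 d) • x = x := by
  rw [← Finset.sum_smul, Lc_sum n r u hu hr, one_smul]

lemma Lc_smul_isWt (hu : Function.Injective u) {d e : Fin n → Fin r} {x : M}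
    (h : IsWt u d x) : (Lc n r u 0 e) • x = if e = d then x else 0 := by
  have aux : ∀ s : Finset (Fin n),
      (((∏ j ∈ s, eR n r u j (e j) : xiAdj n r u) : AKSAlg n r u 0)) • x
        = (am (∏ j ∈ s, if e j = d j then (1:ℂ) else 0)) • x := by
    intro s
    induction s using Finset.induction_on with
    | empty => simp
    | @insert a s' ha ih =>
      have hE : ((eR n r u a (e a) : AKSAlg n r u 0)) • x
          = (am (if e a = d a then (1:ℂ) else 0)) • x := by
        rw [eR_val, aeval_smul_eig u (h a), lagPoly_eval hu (d a) (e a)]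
      rw [Finset.prod_insert ha, Finset.prod_insert ha, MulMemClass.coe_mul, mul_smul, ih,
        am_smul_comm, hE, ← mul_smul, ← map_mul, mul_comm]
  have h1 : Lc n r u 0 e • x
      = (am (∏ j : Fin n, if e j = d j then (1:ℂ) else 0)) • x := by
    rw [Lc_eq_val n r u e]
    exact aux Finset.univ
  have h2 : (∏ j : Fin n, if e j = d j then (1:ℂ) else 0)
      = if e = d then 1 else 0 := by
    by_cases hed : e = d
    · subst hed; simp
    · rw [if_neg hed]
      obtain ⟨j, hj⟩ := Function.ne_iff.mp hed
      exact Finset.prod_eq_zero (Finset.mem_univ j) (if_neg hj)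
  rw [h1, h2]
  split_ifs
  · rw [map_one, one_smul]
  · rw [map_zero, zero_smul]

lemma Sa_smul (hu : Function.Injective u) {d : Fin n → Fin r} {x : M}
    (h : IsWt u d x) (i : Fin (n-1)) :
    Sa n r u i • x = if d (idx0 n i) < d (idx1 n i)
      then (am (u (d (idx1 n i)) - u (d (idx0 n i)))) • x else 0 := by
  have hterm : ∀ p : Fin r × Fin r,
      ((u p.2 - u p.1) • (Polynomial.aeval (Xi n r u 0 (idx0 n i)) (lagPoly r u p.1) *
        Polynomial.aeval (Xi n r u 0 (idx1 n i)) (lagPoly r u p.2))) • x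
      = if p = (d (idx0 n i), d (idx1 n i))
          then (am (u (d (idx1 n i)) - u (d (idx0 n i)))) • x else 0 := by
    intro p
    rw [Algebra.smul_def, mul_smul, mul_smul]
    rw [aeval_smul_eig u (h (idx1 n i)), lagPoly_eval hu (d (idx1 n i)) p.2]
    rw [am_smul_comm, aeval_smul_eig u (h (idx0 n i)), lagPoly_eval hu (d (idx0 n i)) p.1]
    rw [← mul_smul, ← mul_smul, ← map_mul, ← map_mul]
    by_cases h2 : p.2 = d (idx1 n i)
    · by_cases h1 : p.1 = d (idx0 n i)
      · rw [if_pos h2, if_pos h1, if_pos (Prod.ext h1 h2)]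
        rw [h1, h2]
        norm_num
      · rw [if_neg h1, if_pos h2]
        rw [if_neg (fun hp => h1 ((Prod.ext_iff.mp hp).1))]
        norm_num
    · rw [if_neg h2]
      rw [if_neg (fun hp => h2 ((Prod.ext_iff.mp hp).2))]
      norm_num
  unfold Sa
  rw [Finset.sum_smul]
  rw [Finset.sum_congr rfl fun p _ => hterm p]
  rw [Finset.sum_ite_eq' _ (d (idx0 n i), d (idx1 n i))
    (fun _ => (am (u (d (idx1 n i)) - u (d (idx0 n i)))) • x)]
  by_cases hab : d (idx0 n i) < d (idx1 n i)
  · rw [if_pos (by simpa using hab), if_pos hab]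
  · rw [if_neg (by simpa using hab), if_neg hab]

lemma Xi1_Ti_smul {d : Fin n → Fin r} {x : M} (h : IsWt u d x) (i : Fin (n-1)) :
    Xi n r u 0 (idx1 n i) • (Ti n r u 0 i • x)
      = (am (u (d (idx0 n i)))) • (Ti n r u 0 i • x) - Sa n r u i • x := by
  have hc : Xi n r u 0 (idx1 n i) * Ti n r u 0 i
      = Ti n r u 0 i * Xi n r u 0 (idx0 n i) - Sa n r u i := by
    rw [cross_eq, add_sub_cancel_right]
  rw [← mul_smul, hc, sub_smul, mul_smul, h (idx0 n i), am_smul_comm]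

lemma Xi0_Ti_smul {d : Fin n → Fin r} {x : M} (h : IsWt u d x) (i : Fin (n-1)) :
    Xi n r u 0 (idx0 n i) • (Ti n r u 0 i • x)
      = (am (u (d (idx0 n i)) + u (d (idx1 n i)))) • (Ti n r u 0 i • x)
        - Xi n r u 0 (idx1 n i) • (Ti n r u 0 i • x) := by
  have hsum : (Xi n r u 0 (idx1 n i) + Xi n r u 0 (idx0 n i)) • (Ti n r u 0 i • x)
      = (am (u (d (idx0 n i)) + u (d (idx1 n i)))) • (Ti n r u 0 i • x) := by
    rw [← mul_smul, ← sumComm_eq, mul_smul, add_smul, h (idx0 n i), h (idx1 n i),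
      ← add_smul, ← map_add, am_smul_comm,
      show u (d (idx1 n i)) + u (d (idx0 n i)) = u (d (idx0 n i)) + u (d (idx1 n i)) by ring]
  rw [← hsum, add_smul]
  abel

lemma Xij_Ti_smul {d : Fin n → Fin r} {x : M} (h : IsWt u d x) (i : Fin (n-1))
    {j : Fin n} (hj : j ≠ idx0 n i) (hj' : j ≠ idx1 n i) :
    Xi n r u 0 j • (Ti n r u 0 i • x) = (am (u (d j))) • (Ti n r u 0 i • x) := by
  rw [← mul_smul, ← Ti_commTX n r u i j hj hj', mul_smul, h j, am_smul_comm]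

/-- the weight `d` with entries at `i0 i1` swapped -/
def swW (i : Fin (n-1)) (d : Fin n → Fin r) : Fin n → Fin r :=
  d ∘ (Equiv.swap (idx0 n i) (idx1 n i))

lemma idx0_ne_idx1 (i : Fin (n-1)) : idx0 n i ≠ idx1 n i := by
  intro hc
  have := congrArg Fin.val hc
  simp [idx0, idx1] at this

lemma swW_idx0 (i : Fin (n-1)) (d : Fin n → Fin r) :
    swW i d (idx0 n i) = d (idx1 n i) := by
  simp [swW]

lemma swW_idx1 (i : Fin (n-1)) (d : Fin n → Fin r) :
    swW i d (idx1 n i) = d (idx0 n i) := by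
  simp [swW]

lemma swW_other (i : Fin (n-1)) (d : Fin n → Fin r) {j : Fin n}
    (hj : j ≠ idx0 n i) (hj' : j ≠ idx1 n i) : swW i d j = d j := by
  simp [swW, Equiv.swap_apply_of_ne_of_ne hj hj']

lemma swW_swW (i : Fin (n-1)) (d : Fin n → Fin r) : swW i (swW i d) = d := by
  funext j
  simp [swW]

lemma swW_eq_self {i : Fin (n-1)} {d : Fin n → Fin r}
    (heq : d (idx0 n i) = d (idx1 n i)) : swW i d = d := by
  funext j
  by_cases hj : j = idx0 n i
  · subst hj; rw [swW_idx0, heq]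
  by_cases hj' : j = idx1 n i
  · subst hj'; rw [swW_idx1, heq]
  · exact swW_other i d hj hj'

lemma am_sub_smul (c1 c2 : ℂ) (y : M) :
    (am c1) • y - (am c2) • y = (am (c1 - c2)) • y := by
  rw [← sub_smul, ← map_sub]

lemma am_add_smul (c1 c2 : ℂ) (y : M) :
    (am c1) • y + (am c2) • y = (am (c1 + c2)) • y := by
  rw [← add_smul, ← map_add]

lemma isWt_T_eq (hu : Function.Injective u) {d : Fin n → Fin r} {x : M}
    (h : IsWt u d x) (i : Fin (n-1)) (heq : d (idx0 n i) = d (idx1 n i)) :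
    IsWt u d (Ti n r u 0 i • x) := by
  have hSa : Sa n r u i • x = 0 := by
    rw [Sa_smul u hu h i, if_neg (by rw [heq]; exact lt_irrefl _)]
  have h1 : Xi n r u 0 (idx1 n i) • (Ti n r u 0 i • x)
      = (am (u (d (idx1 n i)))) • (Ti n r u 0 i • x) := by
    rw [Xi1_Ti_smul u h i, hSa, sub_zero, heq]
  intro j
  by_cases hj1 : j = idx1 n i
  · subst hj1; exact h1
  by_cases hj0 : j = idx0 n i
  · subst hj0
    rw [Xi0_Ti_smul u h i, h1, am_sub_smul, heq]
    rw [show u (d (idx1 n i)) + u (d (idx1 n i)) - u (d (idx1 n i)) = u (d (idx1 n i)) by ring]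
  · exact Xij_Ti_smul u h i hj0 hj1

lemma isWt_T_desc (hu : Function.Injective u) {d : Fin n → Fin r} {x : M}
    (h : IsWt u d x) (i : Fin (n-1)) (hlt : d (idx1 n i) < d (idx0 n i)) :
    IsWt u (swW i d) (Ti n r u 0 i • x) := by
  have hSa : Sa n r u i • x = 0 := by
    rw [Sa_smul u hu h i, if_neg (asymm hlt)]
  have h1 : Xi n r u 0 (idx1 n i) • (Ti n r u 0 i • x)
      = (am (u (d (idx0 n i)))) • (Ti n r u 0 i • x) := by
    rw [Xi1_Ti_smul u h i, hSa, sub_zero]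
  intro j
  by_cases hj1 : j = idx1 n i
  · subst hj1; rw [swW_idx1]; exact h1
  by_cases hj0 : j = idx0 n i
  · subst hj0
    rw [Xi0_Ti_smul u h i, h1, am_sub_smul, swW_idx0]
    rw [show u (d (idx0 n i)) + u (d (idx1 n i)) - u (d (idx0 n i)) = u (d (idx1 n i)) by ring]
  · rw [swW_other i d hj0 hj1]
    exact Xij_Ti_smul u h i hj0 hj1

lemma isWt_T_asc (hu : Function.Injective u) {d : Fin n → Fin r} {x : M}
    (h : IsWt u d x) (i : Fin (n-1)) (hlt : d (idx0 n i) < d (idx1 n i)) :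
    IsWt u (swW i d) (Ti n r u 0 i • x + x) := by
  have hSa : Sa n r u i • x
      = (am (u (d (idx1 n i)) - u (d (idx0 n i)))) • x := by
    rw [Sa_smul u hu h i, if_pos hlt]
  have h1 : Xi n r u 0 (idx1 n i) • (Ti n r u 0 i • x)
      = (am (u (d (idx0 n i)))) • (Ti n r u 0 i • x)
        - (am (u (d (idx1 n i)) - u (d (idx0 n i)))) • x := by
    rw [Xi1_Ti_smul u h i, hSa]
  intro j
  by_cases hj1 : j = idx1 n i
  · subst hj1
    rw [swW_idx1]
    calc Xi n r u 0 (idx1 n i) • (Ti n r u 0 i • x + x)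
        = Xi n r u 0 (idx1 n i) • (Ti n r u 0 i • x)
            + Xi n r u 0 (idx1 n i) • x := smul_add _ _ _
      _ = ((am (u (d (idx0 n i)))) • (Ti n r u 0 i • x)
            - (am (u (d (idx1 n i)) - u (d (idx0 n i)))) • x)
            + (am (u (d (idx1 n i)))) • x := by rw [h1, h (idx1 n i)]
      _ = (am (u (d (idx0 n i)))) • (Ti n r u 0 i • x)
            + ((am (u (d (idx1 n i)))) • x
              - (am (u (d (idx1 n i)) - u (d (idx0 n i)))) • x) := by abel
      _ = (am (u (d (idx0 n i)))) • (Ti n r u 0 i • x)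
            + (am (u (d (idx0 n i)))) • x := by
          rw [am_sub_smul,
            show u (d (idx1 n i)) - (u (d (idx1 n i)) - u (d (idx0 n i)))
              = u (d (idx0 n i)) by ring]
      _ = (am (u (d (idx0 n i)))) • (Ti n r u 0 i • x + x) := (smul_add _ _ _).symm
  by_cases hj0 : j = idx0 n i
  · subst hj0
    rw [swW_idx0]
    calc Xi n r u 0 (idx0 n i) • (Ti n r u 0 i • x + x)
        = Xi n r u 0 (idx0 n i) • (Ti n r u 0 i • x)
            + Xi n r u 0 (idx0 n i) • x := smul_add _ _ _
      _ = ((am (u (d (idx0 n i)) + u (d (idx1 n i)))) • (Ti n r u 0 i • x)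
            - ((am (u (d (idx0 n i)))) • (Ti n r u 0 i • x)
              - (am (u (d (idx1 n i)) - u (d (idx0 n i)))) • x))
            + (am (u (d (idx0 n i)))) • x := by
          rw [Xi0_Ti_smul u h i, h1, h (idx0 n i)]
      _ = ((am (u (d (idx0 n i)) + u (d (idx1 n i)))) • (Ti n r u 0 i • x)
            - (am (u (d (idx0 n i)))) • (Ti n r u 0 i • x))
            + ((am (u (d (idx1 n i)) - u (d (idx0 n i)))) • x
              + (am (u (d (idx0 n i)))) • x) := by abel
      _ = (am (u (d (idx1 n i)))) • (Ti n r u 0 i • x)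
            + (am (u (d (idx1 n i)))) • x := by
          rw [am_sub_smul, am_add_smul,
            show u (d (idx0 n i)) + u (d (idx1 n i)) - u (d (idx0 n i))
              = u (d (idx1 n i)) by ring,
            show u (d (idx1 n i)) - u (d (idx0 n i)) + u (d (idx0 n i))
              = u (d (idx1 n i)) by ring]
      _ = (am (u (d (idx1 n i)))) • (Ti n r u 0 i • x + x) := (smul_add _ _ _).symm
  · rw [swW_other i d hj0 hj1, smul_add, Xij_Ti_smul u h i hj0 hj1, h j, smul_add]

/-! ### The string argument: common `T`-eigenvector -/

end Mod

section TofSec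

variable (n r : ℕ) (u : Fin r → ℂ)

def Tof (m : ℕ) : AKSAlg n r u 0 := if h : m < n - 1 then Ti n r u 0 ⟨m, h⟩ else 1

lemma Tof_lt {m : ℕ} (h : m < n-1) : Tof n r u m = Ti n r u 0 ⟨m, h⟩ := dif_pos h

lemma Tof_sq {m : ℕ} (h : m < n-1) : Tof n r u m * Tof n r u m = - Tof n r u m := by
  rw [Tof_lt n r u h]; exact Ti_sq n r u ⟨m, h⟩

lemma Tof_braid {m : ℕ} (h : m + 1 < n-1) :
    Tof n r u m * Tof n r u (m+1) * Tof n r u m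
      = Tof n r u (m+1) * Tof n r u m * Tof n r u (m+1) := by
  rw [Tof_lt n r u (by omega : m < n-1), Tof_lt n r u h]
  exact Ti_braid n r u rfl

lemma Tof_comm {a b : ℕ} (hab : a + 2 ≤ b) (hb : b < n-1) :
    Tof n r u a * Tof n r u b = Tof n r u b * Tof n r u a := by
  rw [Tof_lt n r u (by omega : a < n-1), Tof_lt n r u hb]
  exact Ti_commTT n r u (Or.inl hab)

end TofSec

section Mod2

variable {n r : ℕ} (u : Fin r → ℂ)
variable {M : Type} [AddCommGroup M] [Module (AKSAlg n r u 0) M]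

local notation "am" => algebraMap ℂ (AKSAlg n r u 0)

lemma am_neg_one_smul (y : M) : (am (-1 : ℂ)) • y = - y := by
  rw [map_neg, map_one, neg_smul, one_smul]

lemma exists_T_eigen (hM : ∃ v : M, v ≠ 0) :
    ∃ (w : M) (t : Fin (n-1) → ℂ), w ≠ 0 ∧
      ∀ i : Fin (n-1), Ti n r u 0 i • w = (am (t i)) • w := by
  classical
  suffices H : ∀ k : ℕ, ∃ (w : M) (t : ℕ → ℂ), w ≠ 0 ∧
      ∀ m : ℕ, m < k → (hm : m < n-1) → Tof n r u m • w = (am (t m)) • w by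
    obtain ⟨w, t, hw, ht⟩ := H (n-1)
    refine ⟨w, fun i => t i.1, hw, fun i => ?_⟩
    have := ht i.1 i.2 i.2
    rwa [Tof_lt n r u i.2, Fin.eta] at this
  intro k
  induction k with
  | zero =>
    obtain ⟨v, hv⟩ := hM
    exact ⟨v, fun _ => 0, hv, fun m hm _ => absurd hm (Nat.not_lt_zero m)⟩
  | succ k ih =>
    obtain ⟨v, t, hv, htv⟩ := ih
    by_cases hk : k < n - 1
    · -- build the string from v using T_k
      set aux : ℕ → M := fun m => Nat.rec v (fun m' x => Tof n r u (k - m') • x) m with haux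
      have aux_succ : ∀ m : ℕ, aux (m+1) = Tof n r u (k - m) • aux m := fun m => rfl
      have aux_zero : aux 0 = v := rfl
      -- the two commutation rules along the string
      have rules : ∀ m : ℕ, m ≤ k + 1 →
          (∀ i : ℕ, i + 2 ≤ k + 1 - m → Tof n r u i • aux m = (am (t i)) • aux m)
        ∧ (∀ i : ℕ, k + 1 - m < i → i ≤ k → Tof n r u i • aux m = (am (t (i-1))) • aux m) := by
        intro m
        induction m using Nat.strong_induction_on with
        | _ m IH =>
          intro hmk
          constructor
          · intro i hi
            cases m with
            | zero =>
              exact htv i (by omega) (by omega)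
            | succ m' =>
              have hi' : i + 2 ≤ k - m' := by omega
              rw [aux_succ, ← mul_smul,
                Tof_comm n r u hi' (by omega : k - m' < n-1), mul_smul,
                (IH m' (Nat.lt_succ_self m') (by omega)).1 i (by omega), am_smul_comm]
          · intro i hi hik
            cases m with
            | zero => omega
            | succ m' =>
              have hj : k + 1 - (m' + 1) = k - m' := by omega
              by_cases hcase : k - m' + 2 ≤ i
              · -- commuting case
                rw [aux_succ, ← mul_smul,
                  ← Tof_comm n r u hcase (by omega : i < n-1), mul_smul,
                  (IH m' (Nat.lt_succ_self m') (by omega)).2 i (by omega) hik, am_smul_comm]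
              · -- braid case : i = k - m' + 1
                have hieq : i = k - m' + 1 := by omega
                cases m' with
                | zero => omega
                | succ mm =>
                  -- here i = k - mm, j = k - mm - 1
                  have hie : i = k - mm := by omega
                  have hje : k - (mm + 1) = k - mm - 1 := by omega
                  set j : ℕ := k - mm - 1 with hjdef
                  have hij : i = j + 1 := by omega
                  have a2 : aux (mm + 2) = Tof n r u j • aux (mm+1) := by
                    rw [aux_succ, hje]
                  have a1 : aux (mm + 1) = Tof n r u i • aux mm := by
                    rw [aux_succ, hie]
                  have hrule1 : Tof n r u j • aux mm = (am (t j)) • aux mm :=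
                    (IH mm (by omega) (by omega)).1 j (by omega)
                  have hin' : i < n - 1 := lt_of_le_of_lt hik hk
                  have hbr : Tof n r u j * Tof n r u i * Tof n r u j
                      = Tof n r u i * Tof n r u j * Tof n r u i := by
                    rw [hij]
                    exact Tof_braid n r u (by omega : j + 1 < n - 1)
                  calc Tof n r u i • aux (mm+2)
                      = (Tof n r u i * Tof n r u j * Tof n r u i) • aux mm := by
                        rw [a2, a1, ← mul_smul, ← mul_smul]
                    _ = (Tof n r u j * Tof n r u i * Tof n r u j) • aux mm := by rw [← hbr]
                    _ = Tof n r u j • (Tof n r u i • (Tof n r u j • aux mm)) := by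
                        rw [mul_smul, mul_smul]
                    _ = Tof n r u j • (Tof n r u i • ((am (t j)) • aux mm)) := by rw [hrule1]
                    _ = (am (t j)) • (Tof n r u j • (Tof n r u i • aux mm)) := by
                        rw [am_smul_comm, am_smul_comm]
                    _ = (am (t j)) • aux (mm+2) := by rw [← a1, ← a2]
                    _ = (am (t (i-1))) • aux (mm+2) := by rw [hij]; norm_num
      -- pick the last nonzero point of the string
      set m₀ := Nat.findGreatest (fun m => aux m ≠ 0) (k+1) with hm₀
      have hm₀P : aux m₀ ≠ 0 := by
        have h0 : aux 0 ≠ 0 := by rw [aux_zero]; exact hv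
        exact Nat.findGreatest_spec (P := fun m => aux m ≠ 0) (Nat.zero_le (k+1)) h0
      have hm₀le : m₀ ≤ k + 1 := Nat.findGreatest_le _
      have hgt : ∀ m', m₀ < m' → m' ≤ k + 1 → aux m' = 0 := by
        intro m' h1 h2
        by_contra hne
        exact (Nat.findGreatest_is_greatest h1 h2) hne
      refine ⟨aux m₀,
        fun i => if i + 2 ≤ k + 1 - m₀ then t i
          else if i + 1 = k + 1 - m₀ then 0
          else if i = k + 1 - m₀ then -1 else t (i-1),
        hm₀P, ?_⟩
      intro i hik hin
      dsimp only
      by_cases hc1 : i + 2 ≤ k + 1 - m₀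
      · rw [if_pos hc1]
        exact (rules m₀ hm₀le).1 i hc1
      by_cases hc2 : i + 1 = k + 1 - m₀
      · rw [if_neg hc1, if_pos hc2]
        have hm₀k : m₀ ≤ k := by omega
        have hie : i = k - m₀ := by omega
        have : Tof n r u i • aux m₀ = aux (m₀ + 1) := by rw [aux_succ, hie]
        rw [this, hgt (m₀+1) (Nat.lt_succ_self m₀) (by omega), map_zero, zero_smul]
      by_cases hc3 : i = k + 1 - m₀
      · rw [if_neg hc1, if_neg hc2, if_pos hc3]
        have hm₀1 : 1 ≤ m₀ := by omega
        obtain ⟨mm, hmm⟩ : ∃ mm, m₀ = mm + 1 := ⟨m₀ - 1, by omega⟩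
        have hie : i = k - mm := by omega
        have a1 : aux m₀ = Tof n r u i • aux mm := by rw [hmm, aux_succ, hie]
        rw [a1, ← mul_smul, Tof_sq n r u (by omega : i < n-1), neg_smul, ← a1,
          am_neg_one_smul]
      · -- i > k + 1 - m₀
        rw [if_neg hc1, if_neg hc2, if_neg hc3]
        exact (rules m₀ hm₀le).2 i (by omega) (by omega)
    · exact ⟨v, t, hv, fun m hm hmn => htv m (by omega) hmn⟩

end Mod2

/-! ### The potential function -/

section PhiSec

def omg {n : ℕ} (t : Fin (n-1) → ℂ) (j : Fin n) : ℤ :=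
  ∑ m ∈ Finset.range j.1, (if h : m < n-1 then (if t ⟨m, h⟩ = 0 then (-1 : ℤ) else 1) else 0)

def Phi {n r : ℕ} (t : Fin (n-1) → ℂ) (d : Fin n → Fin r) : ℤ :=
  ∑ j : Fin n, omg t j * ((d j).1 : ℤ)

lemma omg_idx1 {n : ℕ} (t : Fin (n-1) → ℂ) (i : Fin (n-1)) :
    omg t (idx1 n i) = omg t (idx0 n i) + (if t i = 0 then (-1:ℤ) else 1) := by
  unfold omg idx0 idx1
  rw [Finset.sum_range_succ]
  congr 1
  rw [dif_pos i.2]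

lemma Phi_swap {n r : ℕ} (t : Fin (n-1) → ℂ) (d : Fin n → Fin r) (i : Fin (n-1)) :
    Phi t (swW i d) - Phi t d
      = (omg t (idx0 n i) - omg t (idx1 n i))
          * (((d (idx1 n i)).1 : ℤ) - ((d (idx0 n i)).1 : ℤ)) := by
  unfold Phi
  rw [← Finset.sum_sub_distrib]
  have hvan : ∀ j ∈ Finset.univ, j ∉ ({idx0 n i, idx1 n i} : Finset (Fin n)) →
      omg t j * ((swW i d j).1 : ℤ) - omg t j * ((d j).1 : ℤ) = 0 := by
    intro j _ hj
    simp only [Finset.mem_insert, Finset.mem_singleton, not_or] at hj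
    rw [swW_other i d hj.1 hj.2, sub_self]
  rw [← Finset.sum_subset (Finset.subset_univ ({idx0 n i, idx1 n i} : Finset (Fin n))) hvan]
  rw [Finset.sum_pair (idx0_ne_idx1 i)]
  rw [swW_idx0, swW_idx1]
  ring

lemma swW_ne {n r : ℕ} {d : Fin n → Fin r} {i : Fin (n-1)}
    (h : d (idx0 n i) ≠ d (idx1 n i)) : swW i d ≠ d := by
  intro hc
  exact h (by rw [← swW_idx0 i d, hc])

end PhiSec

/-! ### Existence of a common eigenvector in a nonzero module -/

section Main

variable {n r : ℕ} (u : Fin r → ℂ)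
variable {M : Type} [AddCommGroup M] [Module (AKSAlg n r u 0) M]

local notation "am" => algebraMap ℂ (AKSAlg n r u 0)

theorem exists_common_eigen (hu : Function.Injective u) (hr : 1 ≤ r)
    (hM : ∃ v : M, v ≠ 0) :
    ∃ (v : M) (d : Fin n → Fin r) (t : Fin (n-1) → ℂ), v ≠ 0 ∧ IsWt u d v ∧
      (∀ i, Ti n r u 0 i • v = (am (t i)) • v) ∧
      (∀ i, t i = 0 ∨ t i = -1) ∧
      (∀ i, d (idx0 n i) < d (idx1 n i) → t i = -1) ∧
      (∀ i, d (idx1 n i) < d (idx0 n i) → t i = 0) := by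
  classical
  obtain ⟨w, τ, hw, hτ⟩ := exists_T_eigen (n := n) (r := r) u hM
  have hτval : ∀ i, τ i = 0 ∨ τ i = -1 := by
    intro i
    have h2 : (Ti n r u 0 i * Ti n r u 0 i) • w = (am (τ i * τ i)) • w := by
      rw [mul_smul, hτ i, am_smul_comm, hτ i, ← mul_smul, ← map_mul]
    rw [Ti_sq, neg_smul, hτ i] at h2
    have h3 : (am (τ i * τ i + τ i)) • w = 0 := by
      rw [← am_add_smul, ← h2, neg_add_cancel]
    have h4 : τ i * τ i + τ i = 0 := am_smul_cancel u h3 hw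
    have h5 : τ i * (τ i + 1) = 0 := by linear_combination h4
    rcases mul_eq_zero.mp h5 with h | h
    · exact Or.inl h
    · exact Or.inr (eq_neg_of_add_eq_zero_left h)
  have hxwt : ∀ d : Fin n → Fin r, IsWt u d (Lc n r u 0 d • w) :=
    fun d => isWt_Lc_smul u d w
  set x : (Fin n → Fin r) → M := fun d => Lc n r u 0 d • w with hxdef
  have hxw : ∑ d : Fin n → Fin r, x d = w := sum_Lc_smul u hu hr w
  set Fs : Finset (Fin n → Fin r) := Finset.univ.filter (fun d => x d ≠ 0) with hFsdef
  have hFsne : Fs.Nonempty := by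
    rcases Finset.eq_empty_or_nonempty Fs with h | h
    · exfalso
      apply hw
      rw [← hxw]
      apply Finset.sum_eq_zero
      intro d _
      by_contra hd
      have hmem : d ∈ Fs := by
        rw [hFsdef]; exact Finset.mem_filter.mpr ⟨Finset.mem_univ d, hd⟩
      rw [h] at hmem
      exact absurd hmem (Finset.notMem_empty d)
    · exact h
  obtain ⟨dm, hdmFs, hdmmin⟩ := Finset.exists_min_image Fs (fun d => Phi τ d) hFsne
  have hdm0 : x dm ≠ 0 := by
    have := Finset.mem_filter.mp hdmFs
    exact this.2
  have hxzero : ∀ d : Fin n → Fin r, Phi τ d < Phi τ dm → x d = 0 := by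
    intro d hPhi
    by_contra hd
    have hdFs : d ∈ Fs := by
      rw [hFsdef]; exact Finset.mem_filter.mpr ⟨Finset.mem_univ d, hd⟩
    exact absurd (hdmmin d hdFs) (not_le.mpr hPhi)
  have master : ∀ (i : Fin (n-1)) (e : Fin n → Fin r),
      (am (τ i)) • x e = ∑ d : Fin n → Fin r, Lc n r u 0 e • (Ti n r u 0 i • x d) := by
    intro i e
    have h1 : Lc n r u 0 e • (Ti n r u 0 i • w) = (am (τ i)) • x e := by
      rw [hτ i, am_smul_comm]
    rw [← h1]
    conv_lhs => rw [← hxw, Finset.smul_sum, Finset.smul_sum]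
  have term_eq : ∀ (i : Fin (n-1)) (e d : Fin n → Fin r), d (idx0 n i) = d (idx1 n i) →
      Lc n r u 0 e • (Ti n r u 0 i • x d) = if e = d then Ti n r u 0 i • x d else 0 :=
    fun i e d heq => Lc_smul_isWt u hu (isWt_T_eq u hu (hxwt d) i heq)
  have term_asc : ∀ (i : Fin (n-1)) (e d : Fin n → Fin r), d (idx0 n i) < d (idx1 n i) →
      Lc n r u 0 e • (Ti n r u 0 i • x d)
        = (if e = swW i d then Ti n r u 0 i • x d + x d else 0)
          - (if e = d then x d else 0) := by
    intro i e d hlt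
    have h1 := Lc_smul_isWt u hu (isWt_T_asc u hu (hxwt d) i hlt) (e := e)
    have h2 := Lc_smul_isWt u hu (hxwt d) (e := e)
    rw [← h1, ← h2, smul_add]
    abel
  have term_desc : ∀ (i : Fin (n-1)) (e d : Fin n → Fin r), d (idx1 n i) < d (idx0 n i) →
      Lc n r u 0 e • (Ti n r u 0 i • x d)
        = if e = swW i d then Ti n r u 0 i • x d else 0 :=
    fun i e d hlt => Lc_smul_isWt u hu (isWt_T_desc u hu (hxwt d) i hlt)
  have key : ∀ i : Fin (n-1), ∃ ti : ℂ,
      (Ti n r u 0 i • x dm = (am ti) • x dm) ∧ (ti = 0 ∨ ti = -1) ∧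
      (dm (idx0 n i) < dm (idx1 n i) → ti = -1) ∧
      (dm (idx1 n i) < dm (idx0 n i) → ti = 0) := by
    intro i
    rcases lt_trichotomy (dm (idx0 n i)) (dm (idx1 n i)) with hlt | heq | hgt
    · -- ascent case
      have hfne : swW i dm ≠ dm := swW_ne (ne_of_lt hlt)
      have hfdesc : (swW i dm) (idx1 n i) < (swW i dm) (idx0 n i) := by
        rw [swW_idx0, swW_idx1]; exact hlt
      have hsum : (am (τ i)) • x (swW i dm) = Ti n r u 0 i • x dm + x dm := by
        rw [master i (swW i dm)]
        rw [Finset.sum_eq_single_of_mem dm (Finset.mem_univ dm) ?h0]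
        · rw [term_asc i (swW i dm) dm hlt, if_pos rfl, if_neg hfne, sub_zero]
        case h0 =>
          intro b _ hbne
          rcases lt_trichotomy (b (idx0 n i)) (b (idx1 n i)) with hb | hb | hb
          · rw [term_asc i (swW i dm) b hb]
            rw [if_neg (fun hc => hbne (by rw [← swW_swW i b, ← hc, swW_swW]))]
            rw [if_neg (fun hc => absurd hb (by rw [← hc]; exact asymm hfdesc))]
            rw [sub_zero]
          · rw [term_eq i (swW i dm) b hb]
            rw [if_neg (fun hc => by rw [← hc] at hb; exact absurd hfdesc (by rw [hb]; exact lt_irrefl _))]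
          · rw [term_desc i (swW i dm) b hb]
            rw [if_neg (fun hc => hbne (by rw [← swW_swW i b, ← hc, swW_swW]))]
      have hzero : Ti n r u 0 i • x dm + x dm = 0 := by
        rcases hτval i with ht0 | ht1
        · rw [ht0, map_zero, zero_smul] at hsum
          exact hsum.symm
        · have hxf : x (swW i dm) = 0 := by
            apply hxzero
            have homg := omg_idx1 τ i
            rw [if_neg (show ¬ τ i = 0 by rw [ht1]; norm_num)] at homg
            have hps := Phi_swap τ dm i
            rw [homg] at hps
            have hnat : (dm (idx0 n i)).1 < (dm (idx1 n i)).1 := hlt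
            have hlt' : ((dm (idx0 n i)).1 : ℤ) < ((dm (idx1 n i)).1 : ℤ) := by
              exact_mod_cast hnat
            nlinarith [hps, hlt']
          rw [hxf, smul_zero] at hsum
          exact hsum.symm
      refine ⟨-1, ?_, Or.inr rfl, fun _ => rfl, fun hc => absurd hc (asymm hlt)⟩
      rw [am_neg_one_smul]
      have := eq_neg_of_add_eq_zero_left hzero
      exact this
    · -- equal case
      refine ⟨τ i, ?_, hτval i,
        fun hc => absurd hc (by rw [heq]; exact lt_irrefl _),
        fun hc => absurd hc (by rw [heq]; exact lt_irrefl _)⟩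
      have hswdm : swW i dm = dm := swW_eq_self heq
      have hsum : (am (τ i)) • x dm = Ti n r u 0 i • x dm := by
        rw [master i dm]
        rw [Finset.sum_eq_single_of_mem dm (Finset.mem_univ dm) ?h0]
        · rw [term_eq i dm dm heq, if_pos rfl]
        case h0 =>
          intro b _ hbne
          rcases lt_trichotomy (b (idx0 n i)) (b (idx1 n i)) with hb | hb | hb
          · rw [term_asc i dm b hb]
            rw [if_neg (fun hc => hbne (by rw [← swW_swW i b, ← hc, hswdm]))]
            rw [if_neg (fun hc => hbne hc.symm)]
            rw [sub_zero]
          · rw [term_eq i dm b hb]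
            rw [if_neg (fun hc => hbne hc.symm)]
          · rw [term_desc i dm b hb]
            rw [if_neg (fun hc => hbne (by rw [← swW_swW i b, ← hc, hswdm]))]
      exact hsum.symm
    · -- descent case
      have hfne : swW i dm ≠ dm := swW_ne (ne_of_gt hgt)
      have hfasc : (swW i dm) (idx0 n i) < (swW i dm) (idx1 n i) := by
        rw [swW_idx0, swW_idx1]; exact hgt
      have hterm : ∀ b : Fin n → Fin r,
          Lc n r u 0 (swW i dm) • (Ti n r u 0 i • x b)
          = (if b = dm then Ti n r u 0 i • x dm else 0)
            + (if b = swW i dm then -(x (swW i dm)) else 0) := by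
        intro b
        rcases lt_trichotomy (b (idx0 n i)) (b (idx1 n i)) with hb | hb | hb
        · -- b ascending : b ≠ dm ; contributes iff b = swW i dm
          have hbdm : b ≠ dm := fun hc => by
            rw [hc] at hb; exact absurd hb (asymm hgt)
          rw [term_asc i (swW i dm) b hb]
          rw [if_neg (fun hc : swW i dm = swW i b => hbdm
            (by rw [← swW_swW i b, ← hc, swW_swW]))]
          rw [if_neg hbdm, zero_add]
          by_cases hbf : b = swW i dm
          · rw [if_pos hbf.symm, if_pos hbf, hbf, zero_sub]
          · rw [if_neg (fun hc : swW i dm = b => hbf hc.symm), if_neg hbf, sub_zero]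
        · -- b equal-colors : contributes 0
          have hbdm : b ≠ dm := fun hc => by
            rw [hc] at hb; rw [hb] at hgt; exact absurd hgt (lt_irrefl _)
          have hbf : b ≠ swW i dm := fun hc => by
            rw [hc] at hb; rw [swW_idx0, swW_idx1] at hb
            rw [hb] at hgt; exact absurd hgt (lt_irrefl _)
          rw [term_eq i (swW i dm) b hb]
          rw [if_neg (fun hc => hbf hc.symm), if_neg hbdm, if_neg hbf, add_zero]
        · -- b descending : contributes iff b = dm
          rw [term_desc i (swW i dm) b hb]
          by_cases hbdm : b = dm
          · subst hbdm
            rw [if_pos rfl, if_pos rfl, if_neg (fun hc => hfne hc.symm), add_zero]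
          · rw [if_neg (fun hc : swW i dm = swW i b => hbdm
              (by rw [← swW_swW i b, ← hc, swW_swW])), if_neg hbdm,
              if_neg (fun hc : b = swW i dm => by
                rw [hc] at hb; exact absurd hb (asymm hfasc)), add_zero]
      have hsum : (am (τ i)) • x (swW i dm)
          = Ti n r u 0 i • x dm - x (swW i dm) := by
        rw [master i (swW i dm)]
        rw [Finset.sum_congr rfl (fun b _ => hterm b), Finset.sum_add_distrib]
        rw [Finset.sum_ite_eq' Finset.univ dm (fun _ => Ti n r u 0 i • x dm)]
        rw [Finset.sum_ite_eq' Finset.univ (swW i dm) (fun _ => -(x (swW i dm)))]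
        rw [if_pos (Finset.mem_univ _), if_pos (Finset.mem_univ _), sub_eq_add_neg]
      have hTzero : Ti n r u 0 i • x dm = 0 := by
        rcases hτval i with ht0 | ht1
        · have hxf : x (swW i dm) = 0 := by
            apply hxzero
            have homg := omg_idx1 τ i
            rw [if_pos ht0] at homg
            have hps := Phi_swap τ dm i
            rw [homg] at hps
            have hnat : (dm (idx1 n i)).1 < (dm (idx0 n i)).1 := hgt
            have hlt' : ((dm (idx1 n i)).1 : ℤ) < ((dm (idx0 n i)).1 : ℤ) := by
              exact_mod_cast hnat
            nlinarith [hps, hlt']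
          rw [ht0, map_zero, zero_smul, hxf, sub_zero] at hsum
          exact hsum.symm
        · rw [ht1, am_neg_one_smul] at hsum
          have h2 : Ti n r u 0 i • x dm - x (swW i dm) = -(x (swW i dm)) := hsum.symm
          have h3 := congrArg (fun z => z + x (swW i dm)) h2
          simpa using h3
      refine ⟨0, ?_, Or.inl rfl, fun hc => absurd hc (asymm hgt), fun _ => rfl⟩
      rw [hTzero, map_zero, zero_smul]
  choose tfun htfun using key
  exact ⟨x dm, dm, tfun, hdm0, hxwt dm, fun i => (htfun i).1, fun i => (htfun i).2.1,
    fun i => (htfun i).2.2.1, fun i => (htfun i).2.2.2⟩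

end Main

/-! ### Characters -/

section Char

variable (n r : ℕ) (u : Fin r → ℂ)

/-- The parameter space for characters. -/
def Cond (p : (Fin n → Fin r) × (Fin (n-1) → ℂ)) : Prop :=
  (∀ i, p.2 i = 0 ∨ p.2 i = -1) ∧ (∀ i, p.1 (idx0 n i) < p.1 (idx1 n i) → p.2 i = -1)
  ∧ (∀ i, p.1 (idx1 n i) < p.1 (idx0 n i) → p.2 i = 0)

def Param : Type := {p : (Fin n → Fin r) × (Fin (n-1) → ℂ) // Cond n r p}

/-- The character on the free algebra. -/
def chiFree (c : Fin n → Fin r) (t : Fin (n-1) → ℂ) : FreeAKS n →ₐ[ℂ] ℂ :=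
  FreeAlgebra.lift ℂ (Sum.elim (fun i => t i) (fun j => u (c j)))

lemma chiFree_tGen (c : Fin n → Fin r) (t : Fin (n-1) → ℂ) (i : Fin (n-1)) :
    chiFree n r u c t (tGen n i) = t i := by
  unfold chiFree tGen
  rw [FreeAlgebra.lift_ι_apply]
  rfl

lemma chiFree_xGen (c : Fin n → Fin r) (t : Fin (n-1) → ℂ) (j : Fin n) :
    chiFree n r u c t (xGen n j) = u (c j) := by
  unfold chiFree xGen
  rw [FreeAlgebra.lift_ι_apply]
  rfl

lemma chiFree_rel (hu : Function.Injective u) (c : Fin n → Fin r) (t : Fin (n-1) → ℂ)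
    (hC : Cond n r (c, t)) :
    ∀ ⦃a b : FreeAKS n⦄, Rel n r u 0 a b → chiFree n r u c t a = chiFree n r u c t b := by
  obtain ⟨h01, hasc, hdesc⟩ := hC
  dsimp only at h01 hasc hdesc
  intro a b hab
  induction hab with
  | quad i =>
    simp only [map_mul, map_sub, map_add, map_zero, map_one, AlgHom.commutes,
      chiFree_tGen]
    rcases h01 i with h | h <;> rw [h] <;> ring
  | braid i j h =>
    simp only [map_mul, chiFree_tGen]
    rcases h01 i with hi | hi <;> rcases h01 j with hj | hj <;> rw [hi, hj] <;> ring
  | commTT i j h =>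
    simp only [map_mul, chiFree_tGen]; ring
  | xPoly j =>
    rw [map_zero, ← Polynomial.aeval_algHom_apply, chiFree_xGen]
    rw [Polynomial.aeval_def, Polynomial.eval₂_eq_eval_map]
    have hmap : (∏ l : Fin r, (X - C (u l))).map (algebraMap ℂ ℂ) = ∏ l : Fin r, (X - C (u l)) := by
      simp
    rw [hmap, Polynomial.eval_prod]
    apply Finset.prod_eq_zero (Finset.mem_univ (c j))
    simp
  | commXX i j =>
    simp only [map_mul, chiFree_xGen]; ring
  | cross i =>
    simp only [map_mul, map_sub, map_smul, map_sum, chiFree_tGen, chiFree_xGen]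
    have heval : ∀ (j : Fin n) (k : Fin r),
        chiFree n r u c t (Polynomial.aeval (xGen n j) (lagPoly r u k))
          = if k = c j then 1 else 0 := by
      intro j k
      rw [← Polynomial.aeval_algHom_apply, chiFree_xGen]
      have : Polynomial.aeval (u (c j)) (lagPoly r u k) = Polynomial.eval (u (c j)) (lagPoly r u k) := by
        rw [Polynomial.aeval_def, Polynomial.eval₂_eq_eval_map]
        simp
      rw [this, lagPoly_eval hu]
    have hsum : ∑ p ∈ Finset.univ.filter (fun p : Fin r × Fin r => p.1 < p.2),
        (u p.2 - u p.1) •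
          (chiFree n r u c t (Polynomial.aeval (xGen n (idx0 n i)) (lagPoly r u p.1)) *
            chiFree n r u c t (Polynomial.aeval (xGen n (idx1 n i)) (lagPoly r u p.2)))
        = if c (idx0 n i) < c (idx1 n i)
            then u (c (idx1 n i)) - u (c (idx0 n i)) else 0 := by
      have hterm : ∀ p : Fin r × Fin r,
          (u p.2 - u p.1) •
            (chiFree n r u c t (Polynomial.aeval (xGen n (idx0 n i)) (lagPoly r u p.1)) *
              chiFree n r u c t (Polynomial.aeval (xGen n (idx1 n i)) (lagPoly r u p.2)))
          = if p = (c (idx0 n i), c (idx1 n i))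
              then u (c (idx1 n i)) - u (c (idx0 n i)) else 0 := by
        intro p
        rw [heval, heval]
        by_cases h2 : p.2 = c (idx1 n i)
        · by_cases h1 : p.1 = c (idx0 n i)
          · rw [if_pos h2, if_pos h1, if_pos (Prod.ext h1 h2), h1, h2]
            simp
          · rw [if_neg h1, if_pos h2, if_neg (fun hp => h1 ((Prod.ext_iff.mp hp).1))]
            simp
        · rw [if_neg h2, if_neg (fun hp => h2 ((Prod.ext_iff.mp hp).2))]
          simp
      rw [Finset.sum_congr rfl fun p _ => hterm p]
      rw [Finset.sum_ite_eq' _ (c (idx0 n i), c (idx1 n i))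
        (fun _ => u (c (idx1 n i)) - u (c (idx0 n i)))]
      by_cases hab : c (idx0 n i) < c (idx1 n i)
      · rw [if_pos (by simpa using hab), if_pos hab]
      · rw [if_neg (by simpa using hab), if_neg hab]
    rw [hsum]
    rcases lt_trichotomy (c (idx0 n i)) (c (idx1 n i)) with hlt | heq | hgt
    · rw [if_pos hlt, hasc i hlt]; simp only [smul_eq_mul]; ring
    · rw [if_neg (by rw [heq]; exact lt_irrefl _), heq]; simp only [smul_eq_mul]; ring
    · rw [if_neg (asymm hgt), hdesc i hgt]; simp only [smul_eq_mul]; ring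
  | sumComm i =>
    simp only [map_mul, map_add, chiFree_tGen, chiFree_xGen]; ring
  | commTX i j h h' =>
    simp only [map_mul, chiFree_tGen, chiFree_xGen]; ring

/-- The character on the quotient algebra. -/
def chi (hu : Function.Injective u) (p : Param n r) : AKSAlg n r u 0 →ₐ[ℂ] ℂ :=
  RingQuot.liftAlgHom ℂ ⟨chiFree n r u p.1.1 p.1.2,
    fun _ _ hab => chiFree_rel n r u hu p.1.1 p.1.2 p.2 hab⟩

lemma chi_Ti (hu : Function.Injective u) (p : Param n r) (i : Fin (n-1)) :
    chi n r u hu p (Ti n r u 0 i) = p.1.2 i := by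
  unfold chi Ti
  rw [RingQuot.liftAlgHom_mkAlgHom_apply]
  exact chiFree_tGen n r u p.1.1 p.1.2 i

lemma chi_Xi (hu : Function.Injective u) (p : Param n r) (j : Fin n) :
    chi n r u hu p (Xi n r u 0 j) = u (p.1.1 j) := by
  unfold chi Xi
  rw [RingQuot.liftAlgHom_mkAlgHom_apply]
  exact chiFree_xGen n r u p.1.1 p.1.2 j

end Char


/-! ### Counting the parameter space -/

section Count

/-- decoding step: colors `≠ a` are coded by `2..r`, `0/1` code staying with `t = 0 / -1`. -/
def stepDec (r : ℕ) (a : Fin r) (e : Fin (r+1)) : Fin r :=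
  if e.1 ≤ 1 then a
  else if e.1 ≤ a.1 + 1 then ⟨e.1 - 2, by have := a.2; omega⟩
  else ⟨e.1 - 1, by have := e.2; have := a.2; omega⟩

def tDec (r : ℕ) (a : Fin r) (e : Fin (r+1)) : ℂ :=
  if e.1 = 0 then 0 else if e.1 = 1 then -1 else if e.1 ≤ a.1 + 1 then 0 else -1

def encodeStep (r : ℕ) (a b : Fin r) (t : ℂ) : Fin (r+1) :=
  if b = a then (if t = 0 then ⟨0, by omega⟩ else ⟨1, by have := a.2; omega⟩)
  else if h : b.1 < a.1 then ⟨b.1 + 2, by have := a.2; omega⟩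
  else ⟨b.1 + 1, by have := b.2; omega⟩

lemma round1 {r : ℕ} (a b : Fin r) (t : ℂ)
    (h01 : t = 0 ∨ t = -1) (hasc : a < b → t = -1) (hdesc : b < a → t = 0) :
    stepDec r a (encodeStep r a b t) = b ∧ tDec r a (encodeStep r a b t) = t := by
  rcases Nat.lt_trichotomy b.1 a.1 with hlt | heq | hgt
  · -- descent
    have hba : b ≠ a := fun hc => by rw [hc] at hlt; exact lt_irrefl _ hlt
    have ht : t = 0 := hdesc (by rw [Fin.lt_def]; omega)
    have he : encodeStep r a b t = ⟨b.1 + 2, by have := a.2; omega⟩ := by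
      unfold encodeStep
      rw [if_neg hba, dif_pos hlt]
    refine ⟨?_, ?_⟩
    · rw [he]
      unfold stepDec
      dsimp only
      rw [if_neg (by omega : ¬ (b.1 + 2 ≤ 1)), if_pos (by omega : b.1 + 2 ≤ a.1 + 1)]
      exact Fin.ext (by simp)
    · rw [he]
      unfold tDec
      dsimp only
      rw [if_neg (by omega : ¬ (b.1 + 2 = 0)), if_neg (by omega : ¬ (b.1 + 2 = 1)),
        if_pos (by omega : b.1 + 2 ≤ a.1 + 1), ht]
  · -- equal
    have hba : b = a := Fin.ext heq
    subst hba
    rcases h01 with ht | ht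
    · have he : encodeStep r b b t = ⟨0, by omega⟩ := by
        unfold encodeStep
        rw [if_pos rfl, if_pos ht]
      refine ⟨?_, ?_⟩
      · rw [he]
        unfold stepDec
        dsimp only
        rw [if_pos (by omega : (0:ℕ) ≤ 1)]
      · rw [he]
        unfold tDec
        dsimp only
        rw [if_pos rfl, ht]
    · have he : encodeStep r b b t = ⟨1, by have := b.2; omega⟩ := by
        unfold encodeStep
        rw [if_pos rfl, if_neg (by rw [ht]; norm_num)]
      refine ⟨?_, ?_⟩
      · rw [he]
        unfold stepDec
        dsimp only
        rw [if_pos (by omega : (1:ℕ) ≤ 1)]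
      · rw [he]
        unfold tDec
        dsimp only
        rw [if_neg (by omega : ¬ (1 = 0)), if_pos rfl, ht]
  · -- ascent
    have hba : b ≠ a := fun hc => by rw [hc] at hgt; exact lt_irrefl _ hgt
    have ht : t = -1 := hasc (by rw [Fin.lt_def]; omega)
    have he : encodeStep r a b t = ⟨b.1 + 1, by have := b.2; omega⟩ := by
      unfold encodeStep
      rw [if_neg hba, dif_neg (by omega : ¬ (b.1 < a.1))]
    refine ⟨?_, ?_⟩
    · rw [he]
      unfold stepDec
      dsimp only
      rw [if_neg (by omega : ¬ (b.1 + 1 ≤ 1)), if_neg (by omega : ¬ (b.1 + 1 ≤ a.1 + 1))]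
      exact Fin.ext (by simp)
    · rw [he]
      unfold tDec
      dsimp only
      rw [if_neg (by omega : ¬ (b.1 + 1 = 0)), if_neg (by omega : ¬ (b.1 + 1 = 1)),
        if_neg (by omega : ¬ (b.1 + 1 ≤ a.1 + 1)), ht]

lemma round2 {r : ℕ} (a : Fin r) (e : Fin (r+1)) :
    encodeStep r a (stepDec r a e) (tDec r a e) = e := by
  have he2 := e.2
  have ha2 := a.2
  by_cases h0 : e.1 ≤ 1
  · have hs : stepDec r a e = a := by unfold stepDec; rw [if_pos h0]
    by_cases h00 : e.1 = 0
    · have htd : tDec r a e = 0 := by unfold tDec; rw [if_pos h00]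
      rw [hs, htd]
      unfold encodeStep
      rw [if_pos rfl, if_pos rfl]
      exact Fin.ext (by simp [h00.symm])
    · have h11 : e.1 = 1 := by omega
      have htd : tDec r a e = -1 := by unfold tDec; rw [if_neg h00, if_pos h11]
      rw [hs, htd]
      unfold encodeStep
      rw [if_pos rfl, if_neg (by norm_num : ¬ (-1 : ℂ) = 0)]
      exact Fin.ext (by simp [h11.symm])
  · by_cases h2 : e.1 ≤ a.1 + 1
    · have hs : stepDec r a e = ⟨e.1 - 2, by omega⟩ := by
        unfold stepDec
        rw [if_neg h0, if_pos h2]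
      have htd : tDec r a e = 0 := by
        unfold tDec
        rw [if_neg (by omega), if_neg (by omega), if_pos h2]
      rw [hs, htd]
      unfold encodeStep
      rw [if_neg (by intro hc; have := congrArg Fin.val hc; dsimp at this; omega),
        dif_pos (by dsimp; omega)]
      exact Fin.ext (by dsimp; omega)
    · have hs : stepDec r a e = ⟨e.1 - 1, by omega⟩ := by
        unfold stepDec
        rw [if_neg h0, if_neg h2]
      have htd : tDec r a e = -1 := by
        unfold tDec
        rw [if_neg (by omega), if_neg (by omega), if_neg h2]
      rw [hs, htd]
      unfold encodeStep
      rw [if_neg (by intro hc; have := congrArg Fin.val hc; dsimp at this; omega),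
        dif_neg (by dsimp; omega)]
      exact Fin.ext (by dsimp; omega)

def cseq (n r : ℕ) (E : Fin r × (Fin (n-1) → Fin (r+1))) : ℕ → Fin r
  | 0 => E.1
  | (k+1) => if h : k < n-1 then stepDec r (cseq n r E k) (E.2 ⟨k, h⟩) else cseq n r E k

lemma tDec_01 {r : ℕ} (a : Fin r) (e : Fin (r+1)) :
    tDec r a e = 0 ∨ tDec r a e = -1 := by
  unfold tDec
  split_ifs <;> simp

theorem card_Param {n r : ℕ} (hn : 1 ≤ n) (hr : 1 ≤ r) :
    Nat.card (Param n r) = r * (r+1)^(n-1) := by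
  classical
  -- decode
  have condDec : ∀ E : Fin r × (Fin (n-1) → Fin (r+1)),
      Cond n r ((fun j : Fin n => cseq n r E j.1), (fun i => tDec r (cseq n r E i.1) (E.2 i))) := by
    intro E
    have hstep : ∀ i : Fin (n-1), cseq n r E (idx1 n i).1
        = stepDec r (cseq n r E i.1) (E.2 i) := by
      intro i
      show cseq n r E (i.1 + 1) = _
      rw [cseq]
      rw [dif_pos i.2]
    refine ⟨fun i => tDec_01 _ _, fun i hlt => ?_, fun i hlt => ?_⟩
    · -- ascent : forced -1
      dsimp only at hlt ⊢
      rw [hstep i] at hlt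
      have h0 : (idx0 n i).1 = i.1 := rfl
      rw [h0] at hlt
      unfold stepDec at hlt
      unfold tDec
      split_ifs at hlt ⊢ with g1 g2 g3 g4 g5 g6 g7 g8
      all_goals first
        | rfl
        | (exact absurd hlt (lt_irrefl _))
        | (exfalso; rw [Fin.lt_def] at hlt; simp at hlt; omega)
        | omega
    · -- descent : forced 0
      dsimp only at hlt ⊢
      rw [hstep i] at hlt
      have h0 : (idx0 n i).1 = i.1 := rfl
      rw [h0] at hlt
      unfold stepDec at hlt
      unfold tDec
      split_ifs at hlt ⊢ with g1 g2 g3 g4 g5 g6 g7 g8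
      all_goals first
        | rfl
        | (exact absurd hlt (lt_irrefl _))
        | (exfalso; rw [Fin.lt_def] at hlt; simp at hlt; omega)
        | omega
  let f : Param n r → Fin r × (Fin (n-1) → Fin (r+1)) := fun p =>
    (p.1.1 ⟨0, hn⟩, fun i => encodeStep r (p.1.1 (idx0 n i)) (p.1.1 (idx1 n i)) (p.1.2 i))
  let g : (Fin r × (Fin (n-1) → Fin (r+1))) → Param n r := fun E =>
    ⟨((fun j : Fin n => cseq n r E j.1), (fun i => tDec r (cseq n r E i.1) (E.2 i))),
      condDec E⟩
  have hseq : ∀ (p : Param n r) (k : ℕ) (hk : k < n), cseq n r (f p) k = p.1.1 ⟨k, hk⟩ := by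
    intro p k
    induction k with
    | zero => intro hk; rfl
    | succ k ih =>
      intro hk
      have hk' : k < n - 1 := by omega
      rw [cseq, dif_pos hk']
      rw [ih (by omega)]
      obtain ⟨h01, hasc, hdesc⟩ := p.2
      have hr1 := round1 (p.1.1 (idx0 n ⟨k, hk'⟩)) (p.1.1 (idx1 n ⟨k, hk'⟩)) (p.1.2 ⟨k, hk'⟩)
        (h01 ⟨k, hk'⟩) (hasc ⟨k, hk'⟩) (hdesc ⟨k, hk'⟩)
      have h0 : (idx0 n ⟨k, hk'⟩ : Fin n) = ⟨k, by omega⟩ := rfl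
      have h1 : (idx1 n ⟨k, hk'⟩ : Fin n) = ⟨k + 1, hk⟩ := rfl
      rw [h0] at hr1
      exact hr1.1
  have hgf : ∀ p, g (f p) = p := by
    intro p
    apply Subtype.ext
    apply Prod.ext
    · funext j
      show cseq n r (f p) j.1 = p.1.1 j
      rw [hseq p j.1 j.2]
    · funext i
      show tDec r (cseq n r (f p) i.1) ((f p).2 i) = p.1.2 i
      have h0 : (idx0 n i).1 = i.1 := rfl
      rw [show cseq n r (f p) i.1 = p.1.1 (idx0 n i) from h0 ▸ hseq p i.1 (by have := i.2; omega)]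
      obtain ⟨h01, hasc, hdesc⟩ := p.2
      exact (round1 (p.1.1 (idx0 n i)) (p.1.1 (idx1 n i)) (p.1.2 i)
        (h01 i) (hasc i) (hdesc i)).2
  have hfg : ∀ E, f (g E) = E := by
    intro E
    apply Prod.ext
    · rfl
    · funext i
      show encodeStep r ((g E).1.1 (idx0 n i)) ((g E).1.1 (idx1 n i)) ((g E).1.2 i) = E.2 i
      have h0 : (g E).1.1 (idx0 n i) = cseq n r E i.1 := rfl
      have h1 : (g E).1.1 (idx1 n i) = stepDec r (cseq n r E i.1) (E.2 i) := by
        show cseq n r E (i.1 + 1) = _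
        rw [cseq, dif_pos i.2]
      have h2 : (g E).1.2 i = tDec r (cseq n r E i.1) (E.2 i) := rfl
      rw [h0, h1, h2]
      exact round2 _ _
  have hcongr : Nat.card (Param n r) = Nat.card (Fin r × (Fin (n-1) → Fin (r+1))) :=
    Nat.card_congr ⟨f, g, hgf, hfg⟩
  rw [hcongr, Nat.card_eq_fintype_card, Fintype.card_prod, Fintype.card_fin,
    Fintype.card_fun, Fintype.card_fin, Fintype.card_fin]

end Count


end AKS0

namespace AKS0

/-- A bundled simple module over a ring `A`. -/
structure SimpleModuleOver (A : Type) [Ring A] : Type 1 where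
  carrier : Type
  [addCommGroup : AddCommGroup carrier]
  [module : Module A carrier]
  [isSimple : IsSimpleModule A carrier]

attribute [instance] SimpleModuleOver.addCommGroup SimpleModuleOver.module
  SimpleModuleOver.isSimple

section Classify

variable (n r : ℕ) (u : Fin r → ℂ)

local notation "am" => algebraMap ℂ (AKSAlg n r u 0)

/-- The module structure on `ℂ` coming from a character. -/
def chiMod (hu : Function.Injective u) (p : Param n r) : Module (AKSAlg n r u 0) ℂ :=
  Module.compHom ℂ (chi n r u hu p).toRingHom

lemma chiMod_smul_def (hu : Function.Injective u) (p : Param n r)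
    (a : AKSAlg n r u 0) (z : ℂ) :
    (letI := chiMod n r u hu p; a • z) = chi n r u hu p a * z := rfl

lemma chiMod_simple (hu : Function.Injective u) (p : Param n r) :
    letI := chiMod n r u hu p; IsSimpleModule (AKSAlg n r u 0) ℂ := by
  letI := chiMod n r u hu p
  have heq : ∀ N : Submodule (AKSAlg n r u 0) ℂ, N = ⊥ ∨ N = ⊤ := by
    intro N
    by_cases h : N = ⊥
    · exact Or.inl h
    · refine Or.inr ?_
      obtain ⟨z, hzN, hz⟩ := Submodule.exists_mem_ne_zero_of_ne_bot h
      rw [eq_top_iff]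
      intro y _
      have : (am (y / z)) • z = y := by
        rw [chiMod_smul_def, AlgHom.commutes]
        simp only [Algebra.algebraMap_self, RingHom.id_apply]
        exact div_mul_cancel₀ y hz
      rw [← this]
      exact N.smul_mem _ hzN
  have hnt : (⊥ : Submodule (AKSAlg n r u 0) ℂ) ≠ ⊤ := by
    intro hbt
    have h1 : (1 : ℂ) ∈ (⊥ : Submodule (AKSAlg n r u 0) ℂ) := by
      rw [hbt]; trivial
    exact one_ne_zero (Submodule.mem_bot _ |>.mp h1)
  haveI : Nontrivial (Submodule (AKSAlg n r u 0) ℂ) := ⟨⟨⊥, ⊤, hnt⟩⟩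
  exact { eq_bot_or_eq_top := heq }

/-- The bundled simple module attached to a character. -/
def chiSMO (hu : Function.Injective u) (p : Param n r) :
    SimpleModuleOver (AKSAlg n r u 0) :=
  { carrier := ℂ, addCommGroup := inferInstance, module := chiMod n r u hu p,
    isSimple := chiMod_simple n r u hu p }

lemma act_eq_chi (hu : Function.Injective u) {M : Type} [AddCommGroup M]
    [Module (AKSAlg n r u 0) M] (p : Param n r) {v : M}
    (hWt : IsWt u p.1.1 v)
    (hT : ∀ i, Ti n r u 0 i • v = (am (p.1.2 i)) • v) :
    ∀ a : AKSAlg n r u 0, a • v = (am (chi n r u hu p a)) • v := by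
  intro a
  obtain ⟨y, rfl⟩ := RingQuot.mkAlgHom_surjective ℂ (Rel n r u 0) a
  have hchi : ∀ z : FreeAKS n,
      chi n r u hu p (RingQuot.mkAlgHom ℂ (Rel n r u 0) z)
        = chiFree n r u p.1.1 p.1.2 z :=
    fun z => RingQuot.liftAlgHom_mkAlgHom_apply _ _ _ _
  rw [hchi]
  induction y using FreeAlgebra.induction with
  | grade0 cz =>
    rw [AlgHom.commutes, AlgHom.commutes]
    simp only [Algebra.algebraMap_self, RingHom.id_apply]
  | grade1 g =>
    rcases g with i | j
    · have h1 : RingQuot.mkAlgHom ℂ (Rel n r u 0) (FreeAlgebra.ι ℂ (Sum.inl i : Gen n))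
          = Ti n r u 0 i := rfl
      have h2 : chiFree n r u p.1.1 p.1.2 (FreeAlgebra.ι ℂ (Sum.inl i : Gen n))
          = p.1.2 i := chiFree_tGen n r u p.1.1 p.1.2 i
      rw [h1, h2]
      exact hT i
    · have h1 : RingQuot.mkAlgHom ℂ (Rel n r u 0) (FreeAlgebra.ι ℂ (Sum.inr j : Gen n))
          = Xi n r u 0 j := rfl
      have h2 : chiFree n r u p.1.1 p.1.2 (FreeAlgebra.ι ℂ (Sum.inr j : Gen n))
          = u (p.1.1 j) := chiFree_xGen n r u p.1.1 p.1.2 j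
      rw [h1, h2]
      exact hWt j
  | mul y z hy hz =>
    rw [map_mul, map_mul, mul_smul, hz, am_smul_comm, hy, ← mul_smul, ← map_mul,
      mul_comm]
  | add y z hy hz =>
    rw [map_add, map_add, add_smul, hy, hz, ← add_smul, ← map_add]

theorem exists_param (hu : Function.Injective u) (hr : 1 ≤ r)
    (X : SimpleModuleOver (AKSAlg n r u 0)) :
    ∃ (p : Param n r) (v : X.carrier), v ≠ 0 ∧
      ∀ a : AKSAlg n r u 0, a • v = (am (chi n r u hu p a)) • v := by
  have hnt : Nontrivial X.carrier := IsSimpleModule.nontrivial (AKSAlg n r u 0) X.carrier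
  have hM : ∃ v : X.carrier, v ≠ 0 := exists_ne 0
  obtain ⟨v, d, t, hv, hWt, hT, h01, hA, hD⟩ :=
    exists_common_eigen (n := n) (r := r) u hu hr hM
  refine ⟨⟨(d, t), ⟨h01, hA, hD⟩⟩, v, hv, ?_⟩
  exact act_eq_chi n r u hu ⟨(d, t), ⟨h01, hA, hD⟩⟩ hWt hT

/-- From a character eigvector, a linear equivalence with the character module. -/
theorem equiv_of_param (hu : Function.Injective u)
    {X : SimpleModuleOver (AKSAlg n r u 0)} (p : Param n r) (v : X.carrier)
    (hv : v ≠ 0)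
    (hact : ∀ a : AKSAlg n r u 0, a • v = (am (chi n r u hu p a)) • v) :
    Nonempty ((chiSMO n r u hu p).carrier ≃ₗ[AKSAlg n r u 0] X.carrier) := by
  letI : Module (AKSAlg n r u 0) ℂ := chiMod n r u hu p
  have hsmul : ∀ (a : AKSAlg n r u 0) (z : ℂ),
      (am (chi n r u hu p a * z)) • v = a • ((am z) • v) := by
    intro a z
    rw [am_smul_comm, hact a, ← mul_smul, ← map_mul, mul_comm]
  let φ : ℂ →ₗ[AKSAlg n r u 0] X.carrier :=
    { toFun := fun z => (am z) • v
      map_add' := fun z₁ z₂ => by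
        show (am (z₁ + z₂)) • v = (am z₁) • v + (am z₂) • v
        rw [map_add, add_smul]
      map_smul' := fun a z => by
        show (am (chi n r u hu p a * z)) • v = a • ((am z) • v)
        exact hsmul a z }
  have hinj : Function.Injective φ := by
    intro z₁ z₂ h
    have h2 : (am (z₁ - z₂)) • v = 0 := by
      rw [map_sub, sub_smul]
      show φ z₁ - φ z₂ = 0
      rw [h, sub_self]
    have h3 := am_smul_cancel u h2 hv
    exact sub_eq_zero.mp h3
  have hsurj : Function.Surjective φ := by
    set R : Submodule (AKSAlg n r u 0) X.carrier :=
      { carrier := Set.range (fun z : ℂ => (am z) • v)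
        add_mem' := by
          rintro _ _ ⟨z₁, rfl⟩ ⟨z₂, rfl⟩
          exact ⟨z₁ + z₂, by
            show (am (z₁ + z₂)) • v = (am z₁) • v + (am z₂) • v
            rw [map_add, add_smul]⟩
        zero_mem' := ⟨0, by
          show (am (0:ℂ)) • v = 0
          rw [map_zero, zero_smul]⟩
        smul_mem' := by
          rintro a _ ⟨z, rfl⟩
          exact ⟨chi n r u hu p a * z, hsmul a z⟩ } with hRdef
    have hRne : R ≠ ⊥ := by
      intro hR
      apply hv
      have hvR : v ∈ R := ⟨1, by
        show (am (1:ℂ)) • v = v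
        rw [map_one, one_smul]⟩
      rw [hR] at hvR
      exact (Submodule.mem_bot _).mp hvR
    have hRtop : R = ⊤ := by
      rcases eq_bot_or_eq_top R with h | h
      · exact absurd h hRne
      · exact h
    intro y
    have hy : y ∈ R := by rw [hRtop]; trivial
    exact hy
  exact ⟨LinearEquiv.ofBijective φ ⟨hinj, hsurj⟩⟩

theorem param_eq_of_equiv (hu : Function.Injective u) {p p' : Param n r}
    (e : (chiSMO n r u hu p).carrier ≃ₗ[AKSAlg n r u 0] (chiSMO n r u hu p').carrier) :
    p = p' := by
  let o : (chiSMO n r u hu p).carrier := (1 : ℂ)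
  let v : (chiSMO n r u hu p').carrier := e o
  let vC : ℂ := v
  have hv : vC ≠ 0 := by
    intro h
    have h0 : e o = e 0 := by
      have hz : e (0 : (chiSMO n r u hu p).carrier) = 0 := map_zero e
      rw [hz]
      exact h
    exact one_ne_zero (show (1 : ℂ) = 0 from e.injective h0)
  have key : ∀ a : AKSAlg n r u 0,
      chi n r u hu p a * vC = chi n r u hu p' a * vC := by
    intro a
    have h1 : a • o = (algebraMap ℂ (AKSAlg n r u 0) (chi n r u hu p a)) • o := by
      show chi n r u hu p a * (1 : ℂ)
        = chi n r u hu p (algebraMap ℂ (AKSAlg n r u 0) (chi n r u hu p a)) * (1 : ℂ)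
      rw [AlgHom.commutes]
      simp
    have h2 := map_smul e a o
    have h3 := map_smul e (algebraMap ℂ (AKSAlg n r u 0) (chi n r u hu p a)) o
    rw [h1] at h2
    have h4 : a • v = (algebraMap ℂ (AKSAlg n r u 0) (chi n r u hu p a)) • v := by
      rw [← h2, h3]
    have h5 : chi n r u hu p' a * vC
        = chi n r u hu p' (algebraMap ℂ (AKSAlg n r u 0) (chi n r u hu p a)) * vC := h4
    rw [AlgHom.commutes] at h5
    simp only [Algebra.algebraMap_self, RingHom.id_apply] at h5
    exact h5.symm
  have hchi : ∀ a, chi n r u hu p a = chi n r u hu p' a :=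
    fun a => mul_right_cancel₀ hv (key a)
  have ht : p.1.2 = p'.1.2 := funext fun i => by
    have := hchi (Ti n r u 0 i)
    rwa [chi_Ti, chi_Ti] at this
  have hc : p.1.1 = p'.1.1 := funext fun j => hu (by
    have := hchi (Xi n r u 0 j)
    rwa [chi_Xi, chi_Xi] at this)
  exact Subtype.ext (Prod.ext hc ht)

end Classify


/-- `H_{n,r}(0)` has exactly `r(r+1)^{n-1}` isomorphism classes of simple
modules, all of dimension one over `ℂ`. -/
theorem simple_module_count (n r : ℕ) (hn : 1 ≤ n) (hr : 1 ≤ r)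
    (u : Fin r → ℂ) (hu : Function.Injective u) :
    Nat.card
        (Quot fun X Y : SimpleModuleOver (AKSAlg n r u 0) =>
          Nonempty (X.carrier ≃ₗ[AKSAlg n r u 0] Y.carrier)) =
      r * (r + 1) ^ (n - 1) ∧
    ∀ X : SimpleModuleOver (AKSAlg n r u 0),
      letI : Module ℂ X.carrier := Module.compHom X.carrier (algebraMap ℂ (AKSAlg n r u 0))
      Module.finrank ℂ X.carrier = 1 := by
  constructor
  · have hequiv : Equivalence (fun X Y : SimpleModuleOver (AKSAlg n r u 0) =>
        Nonempty (X.carrier ≃ₗ[AKSAlg n r u 0] Y.carrier)) := by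
      refine ⟨fun X => ⟨LinearEquiv.refl _ _⟩, ?_, ?_⟩
      · rintro X Y ⟨e⟩
        exact ⟨e.symm⟩
      · rintro X Y Z ⟨e⟩ ⟨f⟩
        exact ⟨e.trans f⟩
    have hbij : Function.Bijective (fun p : Param n r =>
        Quot.mk (fun X Y : SimpleModuleOver (AKSAlg n r u 0) =>
          Nonempty (X.carrier ≃ₗ[AKSAlg n r u 0] Y.carrier)) (chiSMO n r u hu p)) := by
      constructor
      · intro p p' h
        have hgen := Quot.eqvGen_exact h
        have hrel := (hequiv.eqvGen_iff).mp hgen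
        obtain ⟨e⟩ := hrel
        exact param_eq_of_equiv n r u hu e
      · intro q
        induction q using Quot.ind with
        | _ X =>
          obtain ⟨p, v, hv, hact⟩ := exists_param n r u hu hr X
          obtain ⟨e⟩ := equiv_of_param n r u hu p v hv hact
          exact ⟨p, Quot.sound ⟨e⟩⟩
    rw [← Nat.card_eq_of_bijective _ hbij]
    exact card_Param hn hr
  · intro X
    obtain ⟨p, v, hv, hact⟩ := exists_param n r u hu hr X
    letI : Module ℂ X.carrier := Module.compHom X.carrier (algebraMap ℂ (AKSAlg n r u 0))
    have hsmul : ∀ (a : AKSAlg n r u 0) (z : ℂ),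
        (algebraMap ℂ (AKSAlg n r u 0) (chi n r u hu p a * z)) • v
          = a • ((algebraMap ℂ (AKSAlg n r u 0) z) • v) := by
      intro a z
      rw [am_smul_comm, hact a, ← mul_smul, ← map_mul, mul_comm]
    let ψ : ℂ →ₗ[ℂ] X.carrier :=
      { toFun := fun z => (algebraMap ℂ (AKSAlg n r u 0) z) • v
        map_add' := fun z₁ z₂ => by
          show (algebraMap ℂ (AKSAlg n r u 0) (z₁ + z₂)) • v
            = (algebraMap ℂ (AKSAlg n r u 0) z₁) • v
              + (algebraMap ℂ (AKSAlg n r u 0) z₂) • v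
          rw [map_add, add_smul]
        map_smul' := fun c z => by
          show (algebraMap ℂ (AKSAlg n r u 0) (c * z)) • v
            = (algebraMap ℂ (AKSAlg n r u 0) c) • ((algebraMap ℂ (AKSAlg n r u 0) z) • v)
          rw [map_mul, mul_smul] }
    have hinj : Function.Injective ψ := by
      intro z₁ z₂ h
      have h2 : (algebraMap ℂ (AKSAlg n r u 0) (z₁ - z₂)) • v = 0 := by
        rw [map_sub, sub_smul]
        show ψ z₁ - ψ z₂ = 0
        rw [h, sub_self]
      exact sub_eq_zero.mp (am_smul_cancel u h2 hv)
    have hsurj : Function.Surjective ψ := by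
      set R : Submodule (AKSAlg n r u 0) X.carrier :=
        { carrier := Set.range (fun z : ℂ => (algebraMap ℂ (AKSAlg n r u 0) z) • v)
          add_mem' := by
            rintro _ _ ⟨z₁, rfl⟩ ⟨z₂, rfl⟩
            exact ⟨z₁ + z₂, by
              show (algebraMap ℂ (AKSAlg n r u 0) (z₁ + z₂)) • v
                = (algebraMap ℂ (AKSAlg n r u 0) z₁) • v
                  + (algebraMap ℂ (AKSAlg n r u 0) z₂) • v
              rw [map_add, add_smul]⟩
          zero_mem' := ⟨0, by
            show (algebraMap ℂ (AKSAlg n r u 0) (0:ℂ)) • v = 0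
            rw [map_zero, zero_smul]⟩
          smul_mem' := by
            rintro a _ ⟨z, rfl⟩
            exact ⟨chi n r u hu p a * z, hsmul a z⟩ } with hRdef
      have hRne : R ≠ ⊥ := by
        intro hR
        apply hv
        have hvR : v ∈ R := ⟨1, by
          show (algebraMap ℂ (AKSAlg n r u 0) (1:ℂ)) • v = v
          rw [map_one, one_smul]⟩
        rw [hR] at hvR
        exact (Submodule.mem_bot _).mp hvR
      have hRtop : R = ⊤ := by
        rcases eq_bot_or_eq_top R with h | h
        · exact absurd h hRne
        · exact h
      intro y
      have hy : y ∈ R := by rw [hRtop]; trivial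
      exact hy
    have hfr : Module.finrank ℂ ℂ = Module.finrank ℂ X.carrier :=
      (LinearEquiv.ofBijective ψ ⟨hinj, hsurj⟩).finrank_eq
    rw [← hfr, Module.finrank_self]

end AKS0
end
end

section
/- In MR^{(r)}, the colored ribbon basis satisfies the multiplication rule: R_{(I,u)} · R_{(J,v)} = R_{(I,u)·(J,v)} + R_{(I,u)▷(J,v)} if u_p = v_1, and R_{(I,u)} · R_{(J,v)} = R_{(I,u)·(J,v)} if u_p ≠ v_1, for all colored compositions (I,u) = (i_1,…,i_p; u_1,…,u_p) and (J,v) = (j_1,…,j_q; v_1,…,v_q). -/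
/-!
A coarsening of `x :: y :: I` either keeps `x` as a part, and is then `x` followed by a
coarsening of `y :: I`, or merges `x` into `y` (possible only when they have the same color),
losing one part and hence flipping the sign. This gives the recursion
`R_{x y I} = S_x R_{y I} - [x, y same color] R_{(x+y) I}`, which for a one-part left factor is
already the multiplication rule. The general rule follows by induction on the left factor:
expanding its first part by the recursion reduces the product to the rule for two shorter
left factors, and the same recursion reassembles the right-hand side.
-/

noncomputable section

namespace MR

/-- The Mantaci-Reutenauer algebra `MR^{(r)}`: the free associative `ℂ`-algebra on the
symbols `S_j^{(i)}` with `j ≥ 1` and `1 ≤ i ≤ r` (encoded as pairs `(j, i) : ℕ+ × Fin r`). -/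
abbrev MRAlg (r : ℕ) : Type := FreeAlgebra ℂ (ℕ+ × Fin r)

/-- A colored composition, encoded as a list of pairs (part, color)
with positive parts. -/
abbrev CComp (r : ℕ) : Type := List (ℕ+ × Fin r)

/-- The size (sum of the parts) of a colored composition. -/
def size {r : ℕ} (I : CComp r) : ℕ := (I.map fun p => (p.1 : ℕ)).sum

/-- `S^{(I,u)} = S_{i_1}^{(u_1)} ⋯ S_{i_p}^{(u_p)}`. -/
def S {r : ℕ} (I : CComp r) : MRAlg r := (I.map (FreeAlgebra.ι ℂ)).prod

/-- One coarsening step: replace a nonempty group of consecutive parts all of the same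
color by their sum, with that common color. -/
def Step {r : ℕ} (I J : CComp r) : Prop :=
  ∃ (pre mid post : CComp r) (b : Fin r) (m : ℕ+),
    mid ≠ [] ∧ (∀ p ∈ mid, p.2 = b) ∧
    (m : ℕ) = (mid.map fun p => (p.1 : ℕ)).sum ∧
    I = pre ++ mid ++ post ∧ J = pre ++ (m, b) :: post

/-- The partial order on colored compositions: `(J,v) ≤ (I,u)` iff `(J,v)` is obtained
from `(I,u)` by repeatedly replacing groups of consecutive parts of the same color by
their sums. -/
def CLe {r : ℕ} (J I : CComp r) : Prop := Relation.ReflTransGen Step I J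

/-- The colored ribbon `R_{(I,u)} = Σ_{(J,v) ≤ (I,u)} (−1)^{ℓ(I)−ℓ(J)} S^{(J,v)}`. -/
def Rib {r : ℕ} (I : CComp r) : MRAlg r :=
  ∑ᶠ J ∈ {J : CComp r | CLe J I}, ((-1 : ℂ) ^ (I.length - J.length)) • S J

end MR

namespace MR

section

variable {r : ℕ}

/-- `CLe M I` generated from the left: the first part of `I` is either kept or merged with the
second one (see `cLe_iff_coarsens`). -/
inductive Coarsens : CComp r → CComp r → Prop
  | nil : Coarsens [] []
  | cons (x : ℕ+ × Fin r) {I M : CComp r} : Coarsens I M → Coarsens (x :: I) (x :: M)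
  | merge (x y : ℕ+ × Fin r) {I M : CComp r} (h : x.2 = y.2) :
      Coarsens ((x.1 + y.1, x.2) :: I) M → Coarsens (x :: y :: I) M

def IsBlock (B : CComp r) (a : ℕ+ × Fin r) : Prop :=
  B ≠ [] ∧ (∀ p ∈ B, p.2 = a.2) ∧ size B = a.1

lemma isBlock_singleton_iff {x a : ℕ+ × Fin r} : IsBlock [x] a ↔ x = a := by
  simp [IsBlock, size, Prod.ext_iff, and_comm]

lemma isBlock_cons_cons_iff {x y a : ℕ+ × Fin r} {B : CComp r} (h : x.2 = y.2) :
    IsBlock (x :: y :: B) a ↔ IsBlock ((x.1 + y.1, x.2) :: B) a := by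
  simp only [IsBlock, size, List.mem_cons, forall_eq_or_imp, List.map_cons, List.sum_cons,
    PNat.add_coe, ne_eq, reduceCtorEq, not_false_eq_true, true_and, ← h, add_assoc]
  tauto

lemma IsBlock.append {B₁ B₂ : CComp r} {x y : ℕ+ × Fin r} (h₁ : IsBlock B₁ x)
    (h₂ : IsBlock B₂ y) (h : x.2 = y.2) : IsBlock (B₁ ++ B₂) (x.1 + y.1, x.2) := by
  obtain ⟨hne, hcol₁, hsize₁⟩ := h₁
  obtain ⟨-, hcol₂, hsize₂⟩ := h₂
  refine ⟨by simp [hne], ?_, by simp [size] at *; omega⟩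
  simp only [List.mem_append]
  rintro p (hp | hp)
  exacts [hcol₁ p hp, (hcol₂ p hp).trans h.symm]

namespace Coarsens

lemma refl : ∀ I : CComp r, Coarsens I I
  | [] => nil
  | x :: I => cons x (refl I)

lemma length_le {I M : CComp r} (h : Coarsens I M) : M.length ≤ I.length := by
  induction h with
  | nil => rfl
  | cons x _ ih => simpa using ih
  | merge x y _ _ ih => simp only [List.length_cons] at *; omega

lemma append_left (pre : CComp r) {I M : CComp r} (h : Coarsens I M) :
    Coarsens (pre ++ I) (pre ++ M) := by
  induction pre with
  | nil => exact h
  | cons x pre ih => exact cons x ih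

lemma cons_append_block {T T' : CComp r} {a : ℕ+ × Fin r} (hT : Coarsens T T') :
    ∀ (x : ℕ+ × Fin r) (B : CComp r), IsBlock (x :: B) a → Coarsens (x :: B ++ T) (a :: T')
  | x, [], hB => by
    rw [isBlock_singleton_iff.1 hB]
    exact cons a hT
  | x, y :: B, hB => by
    have hxy : x.2 = y.2 := (hB.2.1 x (by simp)).trans (hB.2.1 y (by simp)).symm
    exact merge x y hxy (cons_append_block hT _ B ((isBlock_cons_cons_iff hxy).1 hB))

lemma append_block {B T T' : CComp r} {a : ℕ+ × Fin r} (hB : IsBlock B a)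
    (hT : Coarsens T T') : Coarsens (B ++ T) (a :: T') := by
  obtain ⟨x, B, rfl⟩ := List.exists_cons_of_ne_nil hB.1
  exact cons_append_block hT x B hB

lemma exists_block_of_cons {I M : CComp r} (h : Coarsens I M) {a : ℕ+ × Fin r} {K : CComp r}
    (hM : M = a :: K) : ∃ B I₂, I = B ++ I₂ ∧ IsBlock B a ∧ Coarsens I₂ K := by
  induction h generalizing a K with
  | nil => cases hM
  | cons x h =>
    obtain ⟨rfl, rfl⟩ := List.cons_eq_cons.1 hM
    exact ⟨[x], _, rfl, isBlock_singleton_iff.2 rfl, h⟩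
  | merge x y hxy h ih =>
    obtain ⟨B, I₂, hI, hB, hI₂⟩ := ih hM
    obtain ⟨z, B, rfl⟩ := List.exists_cons_of_ne_nil hB.1
    obtain ⟨rfl, rfl⟩ := List.cons_eq_cons.1 hI
    exact ⟨x :: y :: B, I₂, rfl, (isBlock_cons_cons_iff hxy).2 hB, hI₂⟩

lemma trans {I K M : CComp r} (hIK : Coarsens I K) (hKM : Coarsens K M) : Coarsens I M := by
  induction hKM generalizing I with
  | nil => exact hIK
  | cons x _ ih =>
    obtain ⟨B, I₂, rfl, hB, hI₂⟩ := hIK.exists_block_of_cons rfl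
    exact append_block hB (ih hI₂)
  | merge x y hxy _ ih =>
    obtain ⟨B₁, I₁, rfl, hB₁, hI₁⟩ := hIK.exists_block_of_cons rfl
    obtain ⟨B₂, I₂, rfl, hB₂, hI₂⟩ := hI₁.exists_block_of_cons rfl
    exact ih (by simpa using append_block (hB₁.append hB₂ hxy) hI₂)

lemma le_of_cons_cons {x a : ℕ+ × Fin r} {I M : CComp r} (h : Coarsens (x :: I) (a :: M)) :
    x.1 ≤ a.1 := by
  obtain ⟨B, I₂, hI, ⟨hne, -, hsize⟩, -⟩ := h.exists_block_of_cons rfl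
  obtain ⟨z, B, rfl⟩ := List.exists_cons_of_ne_nil hne
  obtain ⟨rfl, -⟩ := List.cons_eq_cons.1 hI
  rw [← PNat.coe_le_coe, ← hsize]
  simp [size]

end Coarsens

lemma Step.cons {I J : CComp r} (x : ℕ+ × Fin r) (h : Step I J) : Step (x :: I) (x :: J) := by
  obtain ⟨pre, mid, post, b, m, hmid, hcol, hm, rfl, rfl⟩ := h
  exact ⟨x :: pre, mid, post, b, m, hmid, hcol, hm, rfl, rfl⟩

lemma step_merge {x y : ℕ+ × Fin r} (I : CComp r) (h : x.2 = y.2) :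
    Step (x :: y :: I) ((x.1 + y.1, x.2) :: I) :=
  ⟨[], [x, y], I, x.2, x.1 + y.1, by simp, by simp [h], by simp, rfl, rfl⟩

lemma Step.coarsens {I J : CComp r} (h : Step I J) : Coarsens I J := by
  obtain ⟨pre, mid, post, b, m, hmid, hcol, hm, rfl, rfl⟩ := h
  rw [List.append_assoc]
  exact Coarsens.append_left pre (Coarsens.append_block ⟨hmid, hcol, hm.symm⟩ (.refl post))

lemma cLe_iff_coarsens {I M : CComp r} : CLe M I ↔ Coarsens I M := by
  refine ⟨fun h => ?_, fun h => ?_⟩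
  · induction h with
    | refl => exact .refl I
    | tail _ hstep ih => exact ih.trans hstep.coarsens
  · induction h with
    | nil => exact .refl
    | cons x _ ih => exact ih.lift (x :: ·) fun _ _ => Step.cons x
    | merge x y hxy _ ih => exact .head (step_merge _ hxy) ih

lemma setOf_coarsens_cons_cons (x y : ℕ+ × Fin r) (I : CComp r) :
    {M | Coarsens (x :: y :: I) M} =
      (x :: ·) '' {M | Coarsens (y :: I) M} ∪
        {M | x.2 = y.2 ∧ Coarsens ((x.1 + y.1, x.2) :: I) M} := by
  ext M
  constructor
  · rintro (_ | ⟨_, h⟩ | ⟨_, _, hxy, h⟩)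
    exacts [Or.inl ⟨_, h, rfl⟩, Or.inr ⟨hxy, h⟩]
  · rintro (⟨M, h, rfl⟩ | ⟨hxy, h⟩)
    exacts [.cons x h, .merge x y hxy h]

lemma setOf_coarsens_singleton (x : ℕ+ × Fin r) : {M | Coarsens [x] M} = {[x]} := by
  ext M
  constructor
  · rintro (_ | ⟨_, ⟨⟩⟩)
    rfl
  · rintro rfl
    exact .refl _

lemma finite_setOf_coarsens_cons (I : CComp r) :
    ∀ x : ℕ+ × Fin r, {M | Coarsens (x :: I) M}.Finite := by
  induction I with
  | nil => simp [setOf_coarsens_singleton]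
  | cons y I ih =>
    intro x
    rw [setOf_coarsens_cons_cons]
    exact ((ih y).image _).union ((ih _).subset fun _ h => h.2)

lemma finite_setOf_coarsens : ∀ I : CComp r, {M | Coarsens I M}.Finite
  | [] => (Set.finite_singleton []).subset fun _ h => by cases h; rfl
  | x :: I => finite_setOf_coarsens_cons I x

lemma rib_eq_finsum (I : CComp r) :
    Rib I = ∑ᶠ M ∈ {M | Coarsens I M}, ((-1 : ℂ) ^ (I.length - M.length)) • S M := by
  simp only [Rib, cLe_iff_coarsens]

lemma S_cons (x : ℕ+ × Fin r) (I : CComp r) : S (x :: I) = FreeAlgebra.ι ℂ x * S I := by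
  simp [S]

lemma rib_singleton (x : ℕ+ × Fin r) : Rib [x] = FreeAlgebra.ι ℂ x := by
  rw [rib_eq_finsum, setOf_coarsens_singleton, finsum_mem_singleton]
  simp [S]

lemma ι_mul_rib (x y : ℕ+ × Fin r) (I : CComp r) :
    FreeAlgebra.ι ℂ x * Rib (y :: I) =
      Rib (x :: y :: I) + if x.2 = y.2 then Rib ((x.1 + y.1, x.2) :: I) else 0 := by
  set A := {M | Coarsens (y :: I) M}
  set B := {M | x.2 = y.2 ∧ Coarsens ((x.1 + y.1, x.2) :: I) M}
  have hdisj : Disjoint ((x :: ·) '' A) B := by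
    refine Set.disjoint_left.2 ?_
    rintro _ ⟨M, -, rfl⟩ ⟨-, h⟩
    exact (PNat.lt_add_right x.1 y.1).not_ge h.le_of_cons_cons
  have hA : ∑ᶠ M ∈ (x :: ·) '' A, ((-1 : ℂ) ^ ((x :: y :: I).length - M.length)) • S M =
      FreeAlgebra.ι ℂ x * Rib (y :: I) := by
    rw [finsum_mem_image (List.cons_injective.injOn), rib_eq_finsum,
      mul_finsum_mem' _ _ (finite_setOf_coarsens _)]
    simp [A, S_cons]
  have hB : ∑ᶠ M ∈ B, ((-1 : ℂ) ^ ((x :: y :: I).length - M.length)) • S M =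
      -if x.2 = y.2 then Rib ((x.1 + y.1, x.2) :: I) else 0 := by
    split_ifs with hxy
    · simp only [B, hxy, true_and, rib_eq_finsum,
        ← finsum_mem_neg_distrib _ (finite_setOf_coarsens _)]
      refine finsum_mem_congr rfl fun M hM => ?_
      have hlen : M.length ≤ I.length + 1 := Coarsens.length_le hM
      simp only [List.length_cons, show I.length + 1 + 1 - M.length =
        I.length + 1 - M.length + 1 by omega, pow_succ, mul_neg_one, neg_smul]
    · simp [B, hxy]
  rw [rib_eq_finsum (x :: y :: I), setOf_coarsens_cons_cons, finsum_mem_union hdisj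
    ((finite_setOf_coarsens _).image _) ((finite_setOf_coarsens _).subset fun _ h => h.2), hA, hB]
  abel

lemma rib_cons_cons (x y : ℕ+ × Fin r) (I : CComp r) :
    Rib (x :: y :: I) =
      FreeAlgebra.ι ℂ x * Rib (y :: I) - if x.2 = y.2 then Rib ((x.1 + y.1, x.2) :: I) else 0 :=
  eq_sub_of_add_eq (ι_mul_rib x y I).symm

lemma rib_append_singleton_mul (j : ℕ+ × Fin r) (J : CComp r) :
    ∀ (I : CComp r) (ℓ : ℕ+ × Fin r), Rib (I ++ [ℓ]) * Rib (j :: J) =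
      Rib (I ++ ℓ :: j :: J) + if ℓ.2 = j.2 then Rib (I ++ (ℓ.1 + j.1, ℓ.2) :: J) else 0
  | [], ℓ => by rw [List.nil_append, rib_singleton, ι_mul_rib]; rfl
  | [x], ℓ => by
    have h₁ := rib_append_singleton_mul j J [] ℓ
    have h₂ := rib_append_singleton_mul j J [] (x.1 + ℓ.1, x.2)
    simp only [List.nil_append] at h₁ h₂
    simp only [List.singleton_append, rib_cons_cons x, sub_mul, ite_mul, zero_mul, mul_assoc,
      h₁, h₂, add_assoc]
    by_cases hxℓ : x.2 = ℓ.2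
    · simp only [hxℓ, if_true]
      split_ifs <;> simp only [mul_add, mul_zero] <;> abel
    · simp only [hxℓ, if_false, sub_zero]
      split_ifs <;> simp only [mul_add, mul_zero]
  | x :: y :: I, ℓ => by
    have h₁ := rib_append_singleton_mul j J (y :: I) ℓ
    have h₂ := rib_append_singleton_mul j J ((x.1 + y.1, x.2) :: I) ℓ
    simp only [List.cons_append] at h₁ h₂ ⊢
    simp only [rib_cons_cons x y, sub_mul, ite_mul, zero_mul, mul_assoc, h₁, h₂]
    split_ifs <;> simp only [mul_add, mul_zero] <;> abel
termination_by I => I.length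

end

theorem ribbon_mul_general (r : ℕ) (I J : CComp r) (hI : I ≠ []) (hJ : J ≠ []) :
    Rib I * Rib J =
      if (I.getLast hI).2 = (J.head hJ).2 then
        Rib (I ++ J) +
          Rib (I.dropLast ++
            ((I.getLast hI).1 + (J.head hJ).1, (I.getLast hI).2) :: J.tail)
      else Rib (I ++ J) := by
  obtain ⟨j, J, rfl⟩ := List.exists_cons_of_ne_nil hJ
  obtain ⟨I, ℓ, rfl⟩ : ∃ I' ℓ, I = I' ++ [ℓ] :=
    ⟨I.dropLast, I.getLast hI, (List.dropLast_concat_getLast hI).symm⟩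
  simp only [rib_append_singleton_mul, List.getLast_concat, List.head_cons, List.tail_cons,
    List.dropLast_concat, List.append_assoc, List.cons_append, List.nil_append]
  rw [add_ite, add_zero]

/-- the colored ribbon multiplication rule
`R_{(I,u)} R_{(J,v)} = R_{(I,u)·(J,v)} + R_{(I,u)▷(J,v)}` if `u_p = v_1`, and
`R_{(I,u)} R_{(J,v)} = R_{(I,u)·(J,v)}` if `u_p ≠ v_1`. -/
theorem ribbon_mul (r : ℕ) (hr : 1 ≤ r) (I J : CComp r) (hI : I ≠ []) (hJ : J ≠ []) :
    Rib I * Rib J =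
      if (I.getLast hI).2 = (J.head hJ).2 then
        Rib (I ++ J) +
          Rib (I.dropLast ++
            ((I.getLast hI).1 + (J.head hJ).1, (I.getLast hI).2) :: J.tail)
      else Rib (I ++ J) :=
  ribbon_mul_general r I J hI hJ

end MR
end
end

section
/- Let π : MR^{(r)} → NSym be the algebra homomorphism with π(S_j^{(i)}) = S_j for all j ≥ 1 and 1 ≤ i ≤ r. Then for every colored composition (I,u), writing (I,u) as the concatenation of its maximal runs of consecutive parts of constant color, with underlying (uncolored) compositions I^{(1)},…,I^{(m)}, one has π(R_{(I,u)}) = R_{I^{(1)}} · R_{I^{(2)}} ⋯ R_{I^{(m)}}, a product of ordinary noncommutative ribbon functions. -/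
/-!
Coarsening a monochromatic colored composition is the same as coarsening its underlying
composition, so `π` sends the colored ribbon of a single run to the ordinary ribbon of that run.
In general a coarsening never merges parts across a change of color: the coarsenings of a
concatenation of runs with distinct adjacent colors are exactly the concatenations of
coarsenings of the runs, uniquely, and lengths drop additively. Hence the colored ribbon already
factors in `MR^{(r)}` as the product of the ribbons of its runs, and `π` is multiplicative.
-/

noncomputable section

namespace MR

/-- `NSym`: the free associative `ℂ`-algebra on the symbols `S_j`, `j ≥ 1`. -/
abbrev NSym : Type := FreeAlgebra ℂ ℕ+

/-- The algebra homomorphism `π : MR^{(r)} → NSym`, `S_j^{(i)} ↦ S_j`. -/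
def piMR (r : ℕ) : MRAlg r →ₐ[ℂ] NSym :=
  FreeAlgebra.lift ℂ fun p : ℕ+ × Fin r => FreeAlgebra.ι ℂ p.1

/-- `S^J = S_{j_1} ⋯ S_{j_q}` in `NSym`. -/
def SN (I : List ℕ+) : NSym := (I.map (FreeAlgebra.ι ℂ)).prod

/-- One anti-refinement step on (uncolored) compositions: replace a nonempty group of
consecutive parts by their sum. -/
def StepN (I J : List ℕ+) : Prop :=
  ∃ (pre mid post : List ℕ+) (m : ℕ+),
    mid ≠ [] ∧ (m : ℕ) = (mid.map fun p => (p : ℕ)).sum ∧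
    I = pre ++ mid ++ post ∧ J = pre ++ m :: post

/-- The anti-refinement order: `J ≼ I` iff `J` is obtained from `I` by summing groups of
consecutive parts. -/
def NLe (J I : List ℕ+) : Prop := Relation.ReflTransGen StepN I J

/-- The noncommutative ribbon function `R_I = Σ_{J ≼ I} (−1)^{ℓ(I)−ℓ(J)} S^J`. -/
def RibN (I : List ℕ+) : NSym :=
  ∑ᶠ J ∈ {J : List ℕ+ | NLe J I}, ((-1 : ℂ) ^ (I.length - J.length)) • SN J

theorem _root_.List.finite_setOf_length_le_of_forall_mem {α : Type*} {s : Set α} (hs : s.Finite)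
    (n : ℕ) : {l : List α | l.length ≤ n ∧ ∀ x ∈ l, x ∈ s}.Finite := by
  have := hs.to_subtype
  refine ((List.finite_length_le s n).image (List.map (↑))).subset ?_
  rintro l ⟨hl, hmem⟩
  lift l to List s using hmem
  exact ⟨l, by simpa using hl, rfl⟩

variable {r : ℕ}

theorem S_append (I J : CComp r) : S (I ++ J) = S I * S J := by
  simp [S]

theorem le_size_of_mem {I : CComp r} {p : ℕ+ × Fin r} (hp : p ∈ I) : (p.1 : ℕ) ≤ size I :=
  List.le_sum_of_mem (List.mem_map_of_mem hp)

namespace Step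

variable {I J : CComp r}

theorem length_le (h : Step I J) : J.length ≤ I.length := by
  obtain ⟨pre, mid, post, b, m, hmid, -, -, rfl, rfl⟩ := h
  have := List.length_pos_iff.2 hmid
  simp only [List.length_append, List.length_cons]
  omega

theorem size_eq (h : Step I J) : size J = size I := by
  obtain ⟨pre, mid, post, b, m, -, -, hm, rfl, rfl⟩ := h
  simp [size, hm]

theorem forall_color_eq {b : Fin r} (h : Step I J) (hI : ∀ p ∈ I, p.2 = b) :
    ∀ p ∈ J, p.2 = b := by
  obtain ⟨pre, mid, post, b', m, hmid, hmidc, -, rfl, rfl⟩ := h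
  obtain ⟨x, hx⟩ := List.exists_mem_of_ne_nil mid hmid
  have hb' : b' = b := by rw [← hmidc x hx]; exact hI x (by simp [hx])
  simp only [List.mem_append, List.mem_cons] at hI ⊢
  rintro p (hp | rfl | hp)
  exacts [hI p (.inl (.inl hp)), hb', hI p (.inr hp)]

theorem headColor_eq (h : Step I J) : J.head?.map Prod.snd = I.head?.map Prod.snd := by
  obtain ⟨pre, mid, post, b', m, hmid, hmidc, -, rfl, rfl⟩ := h
  cases pre with
  | nil =>
    obtain ⟨x, xs, rfl⟩ := List.exists_cons_of_ne_nil hmid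
    simp [hmidc x (by simp)]
  | cons q qs => simp

theorem append_right (h : Step I J) (K : CComp r) : Step (I ++ K) (J ++ K) := by
  obtain ⟨pre, mid, post, b, m, hmid, hmidc, hm, rfl, rfl⟩ := h
  exact ⟨pre, mid, post ++ K, b, m, hmid, hmidc, hm, by simp, by simp⟩

theorem append_left (h : Step I J) (K : CComp r) : Step (K ++ I) (K ++ J) := by
  obtain ⟨pre, mid, post, b, m, hmid, hmidc, hm, rfl, rfl⟩ := h
  exact ⟨K ++ pre, mid, post, b, m, hmid, hmidc, hm, by simp, by simp⟩

/-- The merged group is monochromatic, so it cannot straddle the boundary of `A ++ B`. -/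
theorem of_append {b : Fin r} {A B : CComp r} (hA : ∀ p ∈ A, p.2 = b)
    (hB : B.head?.map Prod.snd ≠ some b) (h : Step (A ++ B) J) :
    (∃ A', Step A A' ∧ J = A' ++ B) ∨ (∃ B', Step B B' ∧ J = A ++ B') := by
  obtain ⟨pre, mid, post, b', m, hmid, hmidc, hm, heq, rfl⟩ := h
  rcases List.append_eq_append_iff.1 heq with ⟨a, hpm, rfl⟩ | ⟨a, rfl, rfl⟩
  · cases a with
    | nil =>
      rw [List.append_nil] at hpm
      subst hpm
      exact .inl ⟨pre ++ [(m, b')], ⟨pre, mid, [], b', m, hmid, hmidc, hm, by simp, rfl⟩,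
        by simp⟩
    | cons y ys =>
      rcases List.append_eq_append_iff.1 hpm with ⟨d, hA', hd⟩ | ⟨d, rfl, hd⟩
      · cases d with
        | nil =>
          rw [List.append_nil] at hA'
          subst hA' hd
          exact .inr ⟨(m, b') :: post, ⟨[], _, post, b', m, hmid, hmidc, hm, by simp, rfl⟩,
            by simp⟩
        | cons x xs =>
          subst hA' hd
          refine absurd ?_ hB
          simp [hmidc y (by simp), ← hmidc x (by simp), hA x (by simp)]
      · rw [hd]
        exact .inr ⟨d ++ (m, b') :: post,
          ⟨d, mid, post, b', m, hmid, hmidc, hm, by simp, rfl⟩, by simp⟩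
  · exact .inl ⟨pre ++ (m, b') :: a, ⟨pre, mid, a, b', m, hmid, hmidc, hm, by simp, rfl⟩,
      by simp⟩

end Step

namespace CLe

variable {I J : CComp r}

theorem length_le (h : CLe J I) : J.length ≤ I.length := by
  induction h with
  | refl => exact le_rfl
  | tail _ hstep ih => exact hstep.length_le.trans ih

theorem size_eq (h : CLe J I) : size J = size I := by
  induction h with
  | refl => rfl
  | tail _ hstep ih => exact hstep.size_eq.trans ih

theorem forall_color_eq {b : Fin r} (h : CLe J I) (hI : ∀ p ∈ I, p.2 = b) :
    ∀ p ∈ J, p.2 = b := by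
  induction h with
  | refl => exact hI
  | tail _ hstep ih => exact hstep.forall_color_eq ih

theorem headColor_eq (h : CLe J I) : J.head?.map Prod.snd = I.head?.map Prod.snd := by
  induction h with
  | refl => rfl
  | tail _ hstep ih => exact hstep.headColor_eq.trans ih

theorem append {A B A' B' : CComp r} (hA : CLe A' A) (hB : CLe B' B) : CLe (A' ++ B') (A ++ B) :=
  (hA.lift (· ++ B) fun _ _ h => h.append_right B).trans
    (hB.lift (A' ++ ·) fun _ _ h => h.append_left A')

theorem eq_nil (h : CLe J []) : J = [] := by
  induction h with
  | refl => rfl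
  | tail _ hstep ih =>
    subst ih
    obtain ⟨pre, mid, post, b, m, hmid, -, -, h, -⟩ := hstep
    simp_all

end CLe

theorem cle_append_iff {b : Fin r} {A B J : CComp r} (hA : ∀ p ∈ A, p.2 = b)
    (hB : B.head?.map Prod.snd ≠ some b) :
    CLe J (A ++ B) ↔ ∃ A' B', CLe A' A ∧ CLe B' B ∧ A' ++ B' = J := by
  refine ⟨fun h => ?_, fun ⟨A', B', hA', hB', hJ⟩ => hJ ▸ hA'.append hB'⟩
  induction h with
  | refl => exact ⟨A, B, .refl, .refl, rfl⟩
  | tail _ hstep ih =>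
    obtain ⟨A', B', hA', hB', rfl⟩ := ih
    rcases hstep.of_append (hA'.forall_color_eq hA) (hB'.headColor_eq ▸ hB) with
      ⟨A'', hs, rfl⟩ | ⟨B'', hs, rfl⟩
    · exact ⟨A'', B', hA'.tail hs, hB', rfl⟩
    · exact ⟨A', B'', hA', hB'.tail hs, rfl⟩

theorem append_inj_of_color {b : Fin r} {A B A' B' : CComp r}
    (hA : ∀ p ∈ A, p.2 = b) (hA' : ∀ p ∈ A', p.2 = b)
    (hB : B.head?.map Prod.snd ≠ some b) (hB' : B'.head?.map Prod.snd ≠ some b)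
    (h : A ++ B = A' ++ B') : A = A' ∧ B = B' := by
  rcases List.append_eq_append_iff.1 h with ⟨a, rfl, rfl⟩ | ⟨a, rfl, rfl⟩
  · cases a with
    | nil => simp
    | cons y ys => exact absurd (by simp [hA' y (by simp)]) hB
  · cases a with
    | nil => simp
    | cons y ys => exact absurd (by simp [hA y (by simp)]) hB'

theorem finite_setOf_cle (I : CComp r) : {J : CComp r | CLe J I}.Finite := by
  refine (List.finite_setOf_length_le_of_forall_mem
    (((Set.finite_le_nat (size I)).preimage PNat.coe_injective.injOn).prod
      (Set.finite_univ (α := Fin r))) I.length).subset fun J hJ => ?_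
  exact ⟨hJ.length_le, fun p hp => ⟨hJ.size_eq ▸ le_size_of_mem hp, trivial⟩⟩

theorem rib_eq_sum (I : CComp r) :
    Rib I = ∑ J ∈ (finite_setOf_cle I).toFinset, ((-1 : ℂ) ^ (I.length - J.length)) • S J :=
  finsum_mem_eq_finite_toFinset_sum _ (finite_setOf_cle I)

theorem rib_append {b : Fin r} {A B : CComp r} (hA : ∀ p ∈ A, p.2 = b)
    (hB : B.head?.map Prod.snd ≠ some b) :
    Rib (A ++ B) = Rib A * Rib B := by
  classical
  have hset : (finite_setOf_cle (A ++ B)).toFinset =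
      ((finite_setOf_cle A).toFinset ×ˢ (finite_setOf_cle B).toFinset).image
        fun JJ => JJ.1 ++ JJ.2 := by
    ext J
    simp only [Finset.mem_image, Finset.mem_product, Set.Finite.mem_toFinset, Set.mem_ofPred_eq,
      Prod.exists, cle_append_iff hA hB, and_assoc]
  have hinj : Set.InjOn (fun JJ : CComp r × CComp r => JJ.1 ++ JJ.2)
      ↑((finite_setOf_cle A).toFinset ×ˢ (finite_setOf_cle B).toFinset) := by
    rintro ⟨A₁, B₁⟩ h₁ ⟨A₂, B₂⟩ h₂ h
    simp only [Finset.coe_product, Set.mem_prod, Set.Finite.coe_toFinset, Set.mem_ofPred_eq]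
      at h₁ h₂
    obtain ⟨rfl, rfl⟩ := append_inj_of_color (h₁.1.forall_color_eq hA)
      (h₂.1.forall_color_eq hA) (h₁.2.headColor_eq ▸ hB) (h₂.2.headColor_eq ▸ hB) h
    rfl
  rw [rib_eq_sum, rib_eq_sum, rib_eq_sum, Finset.sum_mul_sum, ← Finset.sum_product', hset,
    Finset.sum_image hinj]
  refine Finset.sum_congr rfl fun ⟨A', B'⟩ h => ?_
  simp only [Finset.mem_product, Set.Finite.mem_toFinset, Set.mem_ofPred_eq] at h ⊢
  have := h.1.length_le
  have := h.2.length_le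
  rw [smul_mul_smul_comm, ← pow_add, S_append, List.length_append, List.length_append]
  congr 2
  omega

theorem rib_nil : Rib ([] : CComp r) = 1 := by
  have hset : {J : CComp r | CLe J []} = {[]} :=
    Set.eq_singleton_iff_unique_mem.2 ⟨.refl, fun _ => CLe.eq_nil⟩
  rw [Rib, hset, finsum_mem_singleton]
  simp [S]

theorem piMR_S (J : CComp r) : piMR r (S J) = SN (J.map Prod.fst) := by
  simp [S, SN, map_list_prod, List.map_map, Function.comp_def, piMR]

-- The sum in `StepN` goes through the coercion `List ℕ+ → List ℕ`, which `simp` turns into a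
-- `flatMap`; `← List.map_eq_flatMap` undoes that.
theorem Step.map_fst {I J : CComp r} (h : Step I J) : StepN (I.map Prod.fst) (J.map Prod.fst) := by
  obtain ⟨pre, mid, post, b, m, hmid, -, hm, rfl, rfl⟩ := h
  exact ⟨pre.map Prod.fst, mid.map Prod.fst, post.map Prod.fst, m, by simpa using hmid,
    by simp [hm, ← List.map_eq_flatMap, Function.comp_def], by simp, by simp⟩

theorem StepN.map_color {I J : List ℕ+} (b : Fin r) (h : StepN I J) :
    Step (I.map (·, b)) (J.map (·, b)) := by
  obtain ⟨pre, mid, post, m, hmid, hm, rfl, rfl⟩ := h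
  exact ⟨pre.map (·, b), mid.map (·, b), post.map (·, b), b, m, by simpa using hmid, by simp,
    by simp [hm, ← List.map_eq_flatMap, Function.comp_def], by simp, by simp⟩

theorem map_fst_map_color {b : Fin r} {J : CComp r} (hJ : ∀ p ∈ J, p.2 = b) :
    (J.map Prod.fst).map (·, b) = J := by
  rw [List.map_map]
  conv_rhs => rw [← J.map_id]
  exact List.map_congr_left fun p hp => Prod.ext rfl (hJ p hp).symm

theorem setOf_nle_map_fst {b : Fin r} {A : CComp r} (hA : ∀ p ∈ A, p.2 = b) :
    {L : List ℕ+ | NLe L (A.map Prod.fst)} = List.map Prod.fst '' {J : CComp r | CLe J A} := by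
  ext L
  refine ⟨fun hL => ⟨L.map (·, b), ?_, by simp [List.map_map, Function.comp_def]⟩, ?_⟩
  · have : CLe (L.map (·, b)) ((A.map Prod.fst).map (·, b)) :=
      hL.lift _ fun _ _ h => h.map_color b
    rwa [map_fst_map_color hA] at this
  · rintro ⟨J, hJ, rfl⟩
    exact hJ.lift _ fun _ _ h => h.map_fst

theorem piMR_rib_of_color {b : Fin r} {A : CComp r} (hA : ∀ p ∈ A, p.2 = b) :
    piMR r (Rib A) = RibN (A.map Prod.fst) := by
  have hinj : Set.InjOn (List.map Prod.fst) {J : CComp r | CLe J A} := fun J hJ J' hJ' h => by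
    rw [← map_fst_map_color (CLe.forall_color_eq hJ hA),
      ← map_fst_map_color (CLe.forall_color_eq hJ' hA), h]
  rw [Rib, RibN, setOf_nle_map_fst hA, finsum_mem_image hinj]
  refine ((piMR r).toAddMonoidHom.map_finsum_mem _ (finite_setOf_cle A)).trans ?_
  simp [piMR_S]

theorem piMR_rib_flatten {Ks : List (CComp r)} {bs : List (Fin r)}
    (h : List.Forall₂ (fun K b => K ≠ [] ∧ ∀ p ∈ K, p.2 = b) Ks bs)
    (hadj : bs.IsChain (· ≠ ·)) :
    piMR r (Rib Ks.flatten) = (Ks.map fun K => RibN (K.map Prod.fst)).prod := by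
  induction h with
  | nil => simp [rib_nil]
  | @cons K b Ks bs hK hKs ih =>
    have hhead : Ks.flatten.head?.map Prod.snd ≠ some b := by
      cases hKs with
      | nil => simp
      | @cons K' b' _ _ hK' _ =>
        obtain ⟨y, ys, rfl⟩ := List.exists_cons_of_ne_nil hK'.1
        simpa [hK'.2 y (by simp)] using (List.isChain_cons_cons.1 hadj).1.symm
    rw [List.flatten_cons, rib_append hK.2 hhead, map_mul, piMR_rib_of_color hK.2, ih hadj.tail]
    rfl

theorem pi_ribbon_runs_general (r : ℕ)
    (Ks : List (CComp r)) (bs : List (Fin r)) (hlen : Ks.length = bs.length)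
    (hne : ∀ K ∈ Ks, K ≠ [])
    (hcol : ∀ k : Fin Ks.length, ∀ p ∈ Ks.get k, p.2 = bs.get (Fin.cast hlen k))
    (hadj : bs.Chain' (· ≠ ·)) :
    piMR r (Rib Ks.flatten) = (Ks.map fun K => RibN (K.map fun p => p.1)).prod := by
  refine piMR_rib_flatten (List.forall₂_iff_get.2 ⟨hlen, fun i hi _ => ?_⟩) hadj
  exact ⟨hne _ (Ks.get_mem ⟨i, hi⟩), hcol ⟨i, hi⟩⟩

/-- if the colored composition `(I,u)` is the concatenation of its maximal
constant-color runs with underlying uncolored compositions `I^{(1)},…,I^{(m)}`, then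
`π(R_{(I,u)}) = R_{I^{(1)}} ⋯ R_{I^{(m)}}`, a product of ordinary noncommutative ribbons. -/
theorem pi_ribbon_runs (r : ℕ) (hr : 1 ≤ r)
    (Ks : List (CComp r)) (bs : List (Fin r)) (hlen : Ks.length = bs.length)
    (hne : ∀ K ∈ Ks, K ≠ [])
    (hcol : ∀ k : Fin Ks.length, ∀ p ∈ Ks.get k, p.2 = bs.get (Fin.cast hlen k))
    (hadj : bs.Chain' (· ≠ ·)) :
    piMR r (Rib Ks.flatten) = (Ks.map fun K => RibN (K.map fun p => p.1)).prod :=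
  pi_ribbon_runs_general r Ks bs hlen hne hcol hadj

end MR
end
end
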